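/- arXiv:1207.5842 — 3 statements merged into one kernel-verified Lean document; each statement's English description precedes it below -/
import Mathlib

section
/- Bounded variation principle: there exists a constant 1 < ξ < ∞, namely ξ = exp(c/(b^γ − 1)), such that for each n ≥ 1, each σ ∈ Ω_n, and all x, y ∈ J_σ, one has ξ^{-1} ≤ |(f^n)'(x)| / |(f^n)'(y)| ≤ ξ, where f^n denotes the n-fold composition of f with itself. -/
open MeasureTheory Filter Metric

noncomputable section

/-- A cookie-cutter system on `J = [0,1]`. -/
structure CookieCutter where
  N : ℕ
  hN : 2 ≤ N
  Jsub : Fin N → Set ℝ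
  f : ℝ → ℝ
  φ : Fin N → ℝ → ℝ
  c : ℝ
  γ : ℝ
  b : ℝ
  B : ℝ
  hJsub_sub : ∀ j, Jsub j ⊆ Set.Icc 0 1
  hJsub_interval : ∀ j, ∃ u v : ℝ, u ≤ v ∧ Jsub j = Set.Icc u v
  hJsub_disj : ∀ i j, i ≠ j → Disjoint (Jsub i) (Jsub j)
  hbij : ∀ j, Set.BijOn f (Jsub j) (Set.Icc 0 1)
  hφ_maps : ∀ j, ∀ x ∈ Set.Icc (0:ℝ) 1, φ j x ∈ Jsub j
  hφ_rinv : ∀ j, ∀ x ∈ Set.Icc (0:ℝ) 1, f (φ j x) = x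
  hφ_linv : ∀ j, ∀ x ∈ Jsub j, φ j (f x) = x
  hfdiff : ∀ j, ∀ x ∈ Jsub j, DifferentiableAt ℝ f x
  hφdiff : ∀ j, ∀ x ∈ Set.Icc (0:ℝ) 1, DifferentiableAt ℝ (φ j) x
  hc : 0 < c
  hγ : γ ∈ Set.Ioc (0:ℝ) 1
  hHolder : ∀ j, ∀ x ∈ Jsub j, ∀ y ∈ Jsub j, |deriv f x - deriv f y| ≤ c * |x - y| ^ γ
  hb : IsGLB ((fun x => |deriv f x|) '' ⋃ j, Jsub j) b
  hB : IsLUB ((fun x => |deriv f x|) '' ⋃ j, Jsub j) B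
  hb1 : 1 < b

namespace CookieCutter

variable (cc : CookieCutter)

/-- `φ_σ = φ_{σ_1} ∘ ⋯ ∘ φ_{σ_n}` for a word `σ`. -/
def wordMap : List (Fin cc.N) → ℝ → ℝ
  | [] => id
  | j :: rest => cc.φ j ∘ wordMap rest

/-- The basic interval `J_σ = φ_σ(J)`. -/
def Jc (σ : List (Fin cc.N)) : Set ℝ := cc.wordMap σ '' Set.Icc 0 1

/-- The diameter `|J_σ|`. -/
def diamJ (σ : List (Fin cc.N)) : ℝ := Metric.diam (cc.Jc σ)

/-- `‖φ'_σ‖ = sup_{x ∈ J} |φ'_σ(x)|`. -/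
def φnorm (σ : List (Fin cc.N)) : ℝ :=
  sSup ((fun x => |deriv (cc.wordMap σ) x|) '' Set.Icc 0 1)

/-- The distortion constant `ξ = exp (c / (b^γ − 1))`. -/
def xi : ℝ := Real.exp (cc.c / (cc.b ^ cc.γ - 1))

/-- The cookie-cutter set `E = ⋂_{n ≥ 1} ⋃_{σ ∈ Ω_n} J_σ`. -/
def E : Set ℝ := ⋂ (n : ℕ) (_ : 1 ≤ n), ⋃ σ : Fin n → Fin cc.N, cc.Jc (List.ofFn σ)

/-- `η = ξ^{9h}`. -/
def eta (h : ℝ) : ℝ := cc.xi ^ ((9:ℝ) * h)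

/-- `L = η³ ξ^{3h}`. -/
def Lconst (h : ℝ) : ℝ := (cc.eta h) ^ 3 * cc.xi ^ ((3:ℝ) * h)

/-- A Gibbs-like measure for the cookie-cutter system: a Borel probability measure
supported on `E` with `η⁻¹|J_σ|^h ≤ μ(J_σ) ≤ η|J_σ|^h` for every word `σ`. -/
def IsGibbsLike (μ : Measure ℝ) (h : ℝ) : Prop :=
  IsProbabilityMeasure μ ∧ μ (cc.Eᶜ) = 0 ∧
    ∀ σ : List (Fin cc.N), σ ≠ [] →
      (cc.eta h)⁻¹ * cc.diamJ σ ^ h ≤ (μ (cc.Jc σ)).toReal ∧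
      (μ (cc.Jc σ)).toReal ≤ cc.eta h * cc.diamJ σ ^ h

/-- A finite maximal antichain in `Ω`. -/
def IsFMA (Γ : Finset (List (Fin cc.N))) : Prop :=
  (∀ σ ∈ Γ, σ ≠ []) ∧
  (∀ ω : ℕ → Fin cc.N, ∃ k : ℕ, 1 ≤ k ∧ (List.ofFn fun i : Fin k => ω i) ∈ Γ) ∧
  ∀ σ ∈ Γ, ∀ τ ∈ Γ, σ <+: τ → σ = τ

end CookieCutter

/-- The `n`-th quantization error of order `r`. -/
def Vnr (μ : Measure ℝ) (n : ℕ) (r : ℝ) : ℝ :=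
  sInf ((fun α : Finset ℝ => ∫ x, Metric.infDist x (α : Set ℝ) ^ r ∂μ) ''
    {α : Finset ℝ | α.Nonempty ∧ α.card ≤ n})

/-- The auxiliary quantization error `u_{n,r}` with `U = (0,1)`. -/
def unr (μ : Measure ℝ) (n : ℕ) (r : ℝ) : ℝ :=
  sInf ((fun α : Finset ℝ =>
      ∫ x, Metric.infDist x ((α : Set ℝ) ∪ (Set.Ioo (0:ℝ) 1)ᶜ) ^ r ∂μ) ''
    {α : Finset ℝ | α.card ≤ n})



section BVP

namespace CookieCutter

variable (cc : CookieCutter)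

lemma wordMap_mem_Icc : ∀ (σ : List (Fin cc.N)) {z : ℝ}, z ∈ Set.Icc (0:ℝ) 1 →
    cc.wordMap σ z ∈ Set.Icc (0:ℝ) 1
  | [], z, hz => hz
  | j :: rest, z, hz =>
    cc.hJsub_sub j (cc.hφ_maps j _ (wordMap_mem_Icc rest hz))

lemma wordMap_cons_mem (j : Fin cc.N) (rest : List (Fin cc.N)) {z : ℝ}
    (hz : z ∈ Set.Icc (0:ℝ) 1) : cc.wordMap (j :: rest) z ∈ cc.Jsub j :=
  cc.hφ_maps j _ (cc.wordMap_mem_Icc rest hz)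

lemma f_wordMap_cons (j : Fin cc.N) (rest : List (Fin cc.N)) {z : ℝ}
    (hz : z ∈ Set.Icc (0:ℝ) 1) : cc.f (cc.wordMap (j :: rest) z) = cc.wordMap rest z :=
  cc.hφ_rinv j _ (cc.wordMap_mem_Icc rest hz)

lemma mem_Jsub_of_mem_Jc {j : Fin cc.N} {rest : List (Fin cc.N)} {x : ℝ}
    (hx : x ∈ cc.Jc (j :: rest)) : x ∈ cc.Jsub j := by
  obtain ⟨z, hz, rfl⟩ := hx
  exact cc.wordMap_cons_mem j rest hz

lemma f_mem_Jc {j : Fin cc.N} {rest : List (Fin cc.N)} {x : ℝ}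
    (hx : x ∈ cc.Jc (j :: rest)) : cc.f x ∈ cc.Jc rest := by
  obtain ⟨z, hz, rfl⟩ := hx
  rw [cc.f_wordMap_cons j rest hz]
  exact ⟨z, hz, rfl⟩

lemma b_pos : 0 < cc.b := lt_trans one_pos cc.hb1

lemma b_le_abs_deriv {j : Fin cc.N} {x : ℝ} (hx : x ∈ cc.Jsub j) :
    cc.b ≤ |deriv cc.f x| :=
  cc.hb.1 ⟨x, Set.mem_iUnion.2 ⟨j, hx⟩, rfl⟩

lemma expand {j : Fin cc.N} {x y : ℝ} (hx : x ∈ cc.Jsub j) (hy : y ∈ cc.Jsub j) :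
    cc.b * |x - y| ≤ |cc.f x - cc.f y| := by
  obtain ⟨u, v, huv, hJ⟩ := cc.hJsub_interval j
  -- wlog x < y
  rcases lt_trichotomy x y with h | h | h
  · -- main case via MVT, with roles: prove for a < b in Jsub j
    have key : ∀ a b' : ℝ, a ∈ cc.Jsub j → b' ∈ cc.Jsub j → a < b' →
        cc.b * |a - b'| ≤ |cc.f a - cc.f b'| := by
      intro a b' ha hb' hab
      have hsub : Set.Icc a b' ⊆ cc.Jsub j := by
        rw [hJ] at ha hb' ⊢
        exact Set.Icc_subset_Icc ha.1 hb'.2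
      have hdiff : ∀ t ∈ Set.Icc a b', DifferentiableAt ℝ cc.f t := fun t ht =>
        cc.hfdiff j t (hsub ht)
      obtain ⟨ζ, hζ, hderiv⟩ := exists_deriv_eq_slope cc.f hab
        (fun t ht => (hdiff t ht).continuousAt.continuousWithinAt)
        (fun t ht => (hdiff t (Set.Ioo_subset_Icc_self ht)).differentiableWithinAt)
      have hζmem : ζ ∈ cc.Jsub j := hsub (Set.Ioo_subset_Icc_self hζ)
      have hbd : cc.b ≤ |deriv cc.f ζ| := cc.b_le_abs_deriv hζmem
      have hba : (0:ℝ) < b' - a := sub_pos.2 hab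
      have : |cc.f b' - cc.f a| = |deriv cc.f ζ| * (b' - a) := by
        rw [hderiv] at *
        rw [abs_div, abs_of_pos hba] at *
        field_simp
      have habs : |a - b'| = b' - a := by rw [abs_sub_comm, abs_of_pos hba]
      rw [abs_sub_comm (cc.f a), this, habs]
      exact mul_le_mul_of_nonneg_right hbd (le_of_lt hba)
    exact key x y hx hy h
  · rw [h]
    simp
  · have key : ∀ a b' : ℝ, a ∈ cc.Jsub j → b' ∈ cc.Jsub j → a < b' →
        cc.b * |a - b'| ≤ |cc.f a - cc.f b'| := by
      intro a b' ha hb' hab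
      have hsub : Set.Icc a b' ⊆ cc.Jsub j := by
        rw [hJ] at ha hb' ⊢
        exact Set.Icc_subset_Icc ha.1 hb'.2
      have hdiff : ∀ t ∈ Set.Icc a b', DifferentiableAt ℝ cc.f t := fun t ht =>
        cc.hfdiff j t (hsub ht)
      obtain ⟨ζ, hζ, hderiv⟩ := exists_deriv_eq_slope cc.f hab
        (fun t ht => (hdiff t ht).continuousAt.continuousWithinAt)
        (fun t ht => (hdiff t (Set.Ioo_subset_Icc_self ht)).differentiableWithinAt)
      have hζmem : ζ ∈ cc.Jsub j := hsub (Set.Ioo_subset_Icc_self hζ)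
      have hbd : cc.b ≤ |deriv cc.f ζ| := cc.b_le_abs_deriv hζmem
      have hba : (0:ℝ) < b' - a := sub_pos.2 hab
      have : |cc.f b' - cc.f a| = |deriv cc.f ζ| * (b' - a) := by
        rw [hderiv] at *
        rw [abs_div, abs_of_pos hba] at *
        field_simp
      have habs : |a - b'| = b' - a := by rw [abs_sub_comm, abs_of_pos hba]
      rw [abs_sub_comm (cc.f a), this, habs]
      exact mul_le_mul_of_nonneg_right hbd (le_of_lt hba)
    have := key y x hy hx h
    rwa [abs_sub_comm y x, abs_sub_comm (cc.f y)] at this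

lemma dist_mul_pow_le : ∀ (σ : List (Fin cc.N)) {x y : ℝ}, x ∈ cc.Jc σ → y ∈ cc.Jc σ →
    |x - y| * cc.b ^ σ.length ≤ 1
  | [], x, y, hx, hy => by
    obtain ⟨zx, hzx, rfl⟩ := hx
    obtain ⟨zy, hzy, rfl⟩ := hy
    simp only [CookieCutter.wordMap, id_eq, List.length_nil, pow_zero, mul_one]
    rw [abs_sub_le_iff]
    constructor <;> linarith [hzx.1, hzx.2, hzy.1, hzy.2]
  | j :: rest, x, y, hx, hy => by
    have h1 : cc.b * |x - y| ≤ |cc.f x - cc.f y| :=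
      cc.expand (cc.mem_Jsub_of_mem_Jc hx) (cc.mem_Jsub_of_mem_Jc hy)
    have h2 : |cc.f x - cc.f y| * cc.b ^ rest.length ≤ 1 :=
      dist_mul_pow_le rest (cc.f_mem_Jc hx) (cc.f_mem_Jc hy)
    have hbp : (0:ℝ) < cc.b ^ rest.length := pow_pos cc.b_pos _
    calc |x - y| * cc.b ^ (j :: rest).length
        = (cc.b * |x - y|) * cc.b ^ rest.length := by
          simp only [List.length_cons, pow_succ]; ring
      _ ≤ |cc.f x - cc.f y| * cc.b ^ rest.length :=
          mul_le_mul_of_nonneg_right h1 (le_of_lt hbp)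
      _ ≤ 1 := h2

lemma iterate_mem_Jc : ∀ (σ : List (Fin cc.N)) {x : ℝ}, x ∈ cc.Jc σ → ∀ k, k ≤ σ.length →
    cc.f^[k] x ∈ cc.Jc (σ.drop k)
  | σ, x, hx, 0, _ => hx
  | [], x, hx, k + 1, hk => by simp at hk
  | j :: rest, x, hx, k + 1, hk => by
    rw [Function.iterate_succ_apply]
    exact iterate_mem_Jc rest (cc.f_mem_Jc hx) k (by simpa using hk)

lemma Jc_nonempty_list {σ : List (Fin cc.N)} (hσ : σ ≠ []) {x : ℝ} (hx : x ∈ cc.Jc σ) :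
    ∃ j, x ∈ cc.Jsub j := by
  cases σ with
  | nil => exact absurd rfl hσ
  | cons j rest => exact ⟨j, cc.mem_Jsub_of_mem_Jc hx⟩

lemma deriv_iterate : ∀ (k : ℕ) (σ : List (Fin cc.N)) {x : ℝ}, x ∈ cc.Jc σ → k ≤ σ.length →
    DifferentiableAt ℝ (cc.f^[k]) x ∧
      deriv (cc.f^[k]) x = ∏ i ∈ Finset.range k, deriv cc.f (cc.f^[i] x)
  | 0, σ, x, hx, hk => by
    simp [Function.iterate_zero]
  | k + 1, [], x, hx, hk => by simp at hk
  | k + 1, j :: rest, x, hx, hk => by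
    have hfx : cc.f x ∈ cc.Jc rest := cc.f_mem_Jc hx
    have hfd : DifferentiableAt ℝ cc.f x := cc.hfdiff j x (cc.mem_Jsub_of_mem_Jc hx)
    obtain ⟨hdk, hfor⟩ := deriv_iterate k rest hfx (by simpa using hk)
    rw [Function.iterate_succ]
    refine ⟨hdk.comp x hfd, ?_⟩
    rw [deriv_comp x hdk hfd, hfor, Finset.prod_range_succ']
    simp [Function.iterate_succ_apply]

lemma one_lt_rpow_b : 1 < cc.b ^ cc.γ :=
  (Real.one_lt_rpow_iff_of_pos cc.b_pos).2 (Or.inl ⟨cc.hb1, cc.hγ.1⟩)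

lemma one_lt_xi : 1 < cc.xi := by
  have h := cc.one_lt_rpow_b
  have : (0:ℝ) < cc.c / (cc.b ^ cc.γ - 1) := div_pos cc.hc (by linarith)
  calc (1:ℝ) = Real.exp 0 := Real.exp_zero.symm
    _ < Real.exp (cc.c / (cc.b ^ cc.γ - 1)) := Real.exp_lt_exp.2 this
    _ = cc.xi := rfl

lemma rpow_pow_eq (n : ℕ) : ((cc.b ^ n : ℝ)) ^ cc.γ = (cc.b ^ cc.γ) ^ n := by
  rw [← Real.rpow_natCast cc.b n, ← Real.rpow_mul cc.b_pos.le, mul_comm,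
    Real.rpow_mul cc.b_pos.le, Real.rpow_natCast]

lemma factor {σ : List (Fin cc.N)} (hσ : σ ≠ []) {u v : ℝ}
    (hu : u ∈ cc.Jc σ) (hv : v ∈ cc.Jc σ) :
    |deriv cc.f u| ≤ Real.exp (cc.c * ((cc.b ^ cc.γ)⁻¹) ^ σ.length) * |deriv cc.f v| := by
  obtain ⟨j, rest, rfl⟩ : ∃ j rest, σ = j :: rest := by
    cases σ with
    | nil => exact absurd rfl hσ
    | cons j rest => exact ⟨j, rest, rfl⟩
  have hu' : u ∈ cc.Jsub j := cc.mem_Jsub_of_mem_Jc hu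
  have hv' : v ∈ cc.Jsub j := cc.mem_Jsub_of_mem_Jc hv
  have hH := cc.hHolder j u hu' v hv'
  have hbp : (0:ℝ) < cc.b ^ (j :: rest).length := pow_pos cc.b_pos _
  have h1 : |u - v| ≤ (cc.b ^ (j :: rest).length)⁻¹ := by
    rw [← one_div, le_div_iff₀ hbp]
    exact cc.dist_mul_pow_le (j :: rest) hu hv
  have h2 : |u - v| ^ cc.γ ≤ ((cc.b ^ cc.γ)⁻¹) ^ (j :: rest).length := by
    calc |u - v| ^ cc.γ ≤ ((cc.b ^ (j :: rest).length)⁻¹) ^ cc.γ :=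
          Real.rpow_le_rpow (abs_nonneg _) h1 cc.hγ.1.le
      _ = ((cc.b ^ (j :: rest).length) ^ cc.γ)⁻¹ := Real.inv_rpow hbp.le _
      _ = ((cc.b ^ cc.γ) ^ (j :: rest).length)⁻¹ := by rw [cc.rpow_pow_eq]
      _ = ((cc.b ^ cc.γ)⁻¹) ^ (j :: rest).length := by rw [inv_pow]
  set t := cc.c * ((cc.b ^ cc.γ)⁻¹) ^ (j :: rest).length with ht
  have ht0 : 0 ≤ t := by
    exact mul_nonneg cc.hc.le
      (pow_nonneg (inv_nonneg.2 (Real.rpow_nonneg cc.b_pos.le _)) _)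
  have hcd : cc.c * |u - v| ^ cc.γ ≤ t :=
    mul_le_mul_of_nonneg_left h2 cc.hc.le
  have hbv : 1 ≤ |deriv cc.f v| := le_trans cc.hb1.le (cc.b_le_abs_deriv hv')
  have step1 : |deriv cc.f u| ≤ |deriv cc.f v| + t := by
    have := abs_sub_abs_le_abs_sub (deriv cc.f u) (deriv cc.f v)
    linarith
  have step2 : |deriv cc.f v| + t ≤ (1 + t) * |deriv cc.f v| := by nlinarith
  have step3 : (1 + t) * |deriv cc.f v| ≤ Real.exp t * |deriv cc.f v| := by
    apply mul_le_mul_of_nonneg_right _ (abs_nonneg _)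
    have := Real.add_one_le_exp t
    linarith
  linarith

lemma geom_bound (n : ℕ) :
    ∑ i ∈ Finset.range n, ((cc.b ^ cc.γ)⁻¹) ^ (n - i) ≤ (cc.b ^ cc.γ - 1)⁻¹ := by
  have hB : 1 < cc.b ^ cc.γ := cc.one_lt_rpow_b
  set r := (cc.b ^ cc.γ)⁻¹ with hr
  have hr0 : 0 < r := inv_pos.2 (by linarith)
  have hr1 : r < 1 := inv_lt_one_of_one_lt₀ hB
  have hre : ∑ i ∈ Finset.range n, r ^ (n - i) = ∑ i ∈ Finset.range n, r ^ (i + 1) := by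
    rw [← Finset.sum_range_reflect (fun i => r ^ (i + 1)) n]
    apply Finset.sum_congr rfl
    intro i hi
    rw [Finset.mem_range] at hi
    congr 1
    omega
  rw [hre]
  have hmul : ∑ i ∈ Finset.range n, r ^ (i + 1) = r * ∑ i ∈ Finset.range n, r ^ i := by
    rw [Finset.mul_sum]
    apply Finset.sum_congr rfl
    intro i _
    ring
  rw [hmul]
  have hs : (∑ i ∈ Finset.range n, r ^ i) * (r - 1) = r ^ n - 1 := geom_sum_mul r n
  have hrn : 0 ≤ r ^ n := le_of_lt (pow_pos hr0 n)
  have hsn : 0 ≤ ∑ i ∈ Finset.range n, r ^ i :=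
    Finset.sum_nonneg fun i _ => le_of_lt (pow_pos hr0 i)
  have hs' : ∑ i ∈ Finset.range n, r ^ i ≤ 1 / (1 - r) := by
    rw [le_div_iff₀ (by linarith)]
    nlinarith
  calc r * ∑ i ∈ Finset.range n, r ^ i ≤ r * (1 / (1 - r)) :=
        mul_le_mul_of_nonneg_left hs' hr0.le
    _ = (cc.b ^ cc.γ - 1)⁻¹ := by
        rw [hr]
        have h1 : cc.b ^ cc.γ ≠ 0 := by linarith
        have h2 : cc.b ^ cc.γ - 1 ≠ 0 := by intro h; rw [sub_eq_zero] at h; linarith [h.symm]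
        field_simp

lemma iter_deriv_le {σ : List (Fin cc.N)} (hσ : σ ≠ []) {x y : ℝ}
    (hx : x ∈ cc.Jc σ) (hy : y ∈ cc.Jc σ) :
    |deriv (cc.f^[σ.length]) x| ≤ cc.xi * |deriv (cc.f^[σ.length]) y| := by
  set n := σ.length with hn
  rw [(cc.deriv_iterate n σ hx le_rfl).2, (cc.deriv_iterate n σ hy le_rfl).2,
    Finset.abs_prod, Finset.abs_prod]
  set r := (cc.b ^ cc.γ)⁻¹ with hr
  have key : ∀ i ∈ Finset.range n,
      |deriv cc.f (cc.f^[i] x)| ≤ Real.exp (cc.c * r ^ (n - i)) * |deriv cc.f (cc.f^[i] y)| := by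
    intro i hi
    rw [Finset.mem_range] at hi
    have hxd : cc.f^[i] x ∈ cc.Jc (σ.drop i) := cc.iterate_mem_Jc σ hx i hi.le
    have hyd : cc.f^[i] y ∈ cc.Jc (σ.drop i) := cc.iterate_mem_Jc σ hy i hi.le
    have hne : σ.drop i ≠ [] := by
      rw [Ne, List.drop_eq_nil_iff]
      omega
    have := cc.factor hne hxd hyd
    rwa [List.length_drop] at this
  calc ∏ i ∈ Finset.range n, |deriv cc.f (cc.f^[i] x)|
      ≤ ∏ i ∈ Finset.range n, (Real.exp (cc.c * r ^ (n - i)) * |deriv cc.f (cc.f^[i] y)|) :=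
        Finset.prod_le_prod (fun i _ => abs_nonneg _) key
    _ = (∏ i ∈ Finset.range n, Real.exp (cc.c * r ^ (n - i))) *
        ∏ i ∈ Finset.range n, |deriv cc.f (cc.f^[i] y)| := Finset.prod_mul_distrib
    _ ≤ cc.xi * ∏ i ∈ Finset.range n, |deriv cc.f (cc.f^[i] y)| := by
        apply mul_le_mul_of_nonneg_right _
          (Finset.prod_nonneg fun i _ => abs_nonneg _)
        rw [← Real.exp_sum]
        have hsum : ∑ i ∈ Finset.range n, cc.c * r ^ (n - i) ≤ cc.c / (cc.b ^ cc.γ - 1) := by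
          rw [← Finset.mul_sum, div_eq_mul_inv]
          exact mul_le_mul_of_nonneg_left (cc.geom_bound n) cc.hc.le
        exact Real.exp_le_exp.2 hsum

lemma iter_deriv_pos {σ : List (Fin cc.N)} {y : ℝ} (hy : y ∈ cc.Jc σ) :
    0 < |deriv (cc.f^[σ.length]) y| := by
  rw [(cc.deriv_iterate σ.length σ hy le_rfl).2, Finset.abs_prod]
  apply Finset.prod_pos
  intro i hi
  rw [Finset.mem_range] at hi
  have hyd : cc.f^[i] y ∈ cc.Jc (σ.drop i) := cc.iterate_mem_Jc σ hy i hi.le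
  have hne : σ.drop i ≠ [] := by
    rw [Ne, List.drop_eq_nil_iff]
    omega
  obtain ⟨j, hj⟩ := cc.Jc_nonempty_list hne hyd
  exact lt_of_lt_of_le cc.b_pos (cc.b_le_abs_deriv hj)


end CookieCutter

end BVP

theorem bounded_variation_principle (cc : CookieCutter) :
    1 < cc.xi ∧
    ∀ n : ℕ, 1 ≤ n → ∀ σ : List (Fin cc.N), σ.length = n →
      ∀ x ∈ cc.Jc σ, ∀ y ∈ cc.Jc σ,
        cc.xi⁻¹ ≤ |deriv (cc.f^[n]) x| / |deriv (cc.f^[n]) y| ∧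
        |deriv (cc.f^[n]) x| / |deriv (cc.f^[n]) y| ≤ cc.xi := by
  refine ⟨cc.one_lt_xi, ?_⟩
  intro n hn σ hlen x hx y hy
  subst hlen
  have hσ : σ ≠ [] := by
    intro h
    rw [h] at hn
    simp at hn
  have hposy : 0 < |deriv (cc.f^[σ.length]) y| := cc.iter_deriv_pos hy
  have hposx : 0 < |deriv (cc.f^[σ.length]) x| := cc.iter_deriv_pos hx
  have hxy := cc.iter_deriv_le hσ hx hy
  have hyx := cc.iter_deriv_le hσ hy hx
  have hxi : (0:ℝ) < cc.xi := lt_trans one_pos cc.one_lt_xi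
  constructor
  · rw [le_div_iff₀ hposy]
    calc cc.xi⁻¹ * |deriv (cc.f^[σ.length]) y| ≤ cc.xi⁻¹ * (cc.xi * |deriv (cc.f^[σ.length]) x|) :=
          mul_le_mul_of_nonneg_left hyx (inv_nonneg.2 hxi.le)
      _ = |deriv (cc.f^[σ.length]) x| := by field_simp
  · rw [div_le_iff₀ hposy]
    exact hxy
end
end

section
/- For every word σ ∈ Ω and every x ∈ J, one has ξ^{-1} |J_σ| ≤ |φ'_σ(x)| ≤ ξ |J_σ|. -/
open MeasureTheory Filter Metric

noncomputable section

namespace CookieCutterAux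

open Real Set

variable (cc : CookieCutter)

lemma b_pos : (0:ℝ) < cc.b := lt_trans one_pos cc.hb1

lemma b_le_B : cc.b ≤ cc.B := by
  obtain ⟨u, v, huv, hs⟩ := cc.hJsub_interval ⟨0, by have := cc.hN; omega⟩
  have hu : u ∈ cc.Jsub ⟨0, by have := cc.hN; omega⟩ := by rw [hs]; exact ⟨le_refl u, huv⟩
  have hmem : u ∈ ⋃ j, cc.Jsub j := Set.mem_iUnion.2 ⟨_, hu⟩
  exact le_trans (cc.hb.1 ⟨u, hmem, rfl⟩) (cc.hB.1 ⟨u, hmem, rfl⟩)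

lemma B_pos : (0:ℝ) < cc.B := lt_of_lt_of_le (b_pos cc) (b_le_B cc)

lemma fderiv_bounds {z : ℝ} (hz : z ∈ ⋃ j, cc.Jsub j) :
    cc.b ≤ |deriv cc.f z| ∧ |deriv cc.f z| ≤ cc.B :=
  ⟨cc.hb.1 ⟨z, hz, rfl⟩, cc.hB.1 ⟨z, hz, rfl⟩⟩

lemma mul_eq_one (j : Fin cc.N) {x : ℝ} (hx : x ∈ Set.Icc (0:ℝ) 1) :
    deriv cc.f (cc.φ j x) * deriv (cc.φ j) x = 1 := by
  have hu : cc.φ j x ∈ cc.Jsub j := cc.hφ_maps j x hx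
  have hf : HasDerivAt cc.f (deriv cc.f (cc.φ j x)) (cc.φ j x) :=
    (cc.hfdiff j _ hu).hasDerivAt
  have hφ : HasDerivAt (cc.φ j) (deriv (cc.φ j) x) x := (cc.hφdiff j x hx).hasDerivAt
  have hcomp : HasDerivWithinAt (cc.f ∘ cc.φ j)
      (deriv cc.f (cc.φ j x) * deriv (cc.φ j) x) (Set.Icc 0 1) x :=
    (hf.comp x hφ).hasDerivWithinAt
  have hid : HasDerivWithinAt (cc.f ∘ cc.φ j) 1 (Set.Icc 0 1) x :=
    (hasDerivWithinAt_id x (Set.Icc 0 1)).congr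
      (fun y hy => by simpa using cc.hφ_rinv j y hy)
      (by simpa using cc.hφ_rinv j x hx)
  have hud : UniqueDiffWithinAt ℝ (Set.Icc (0:ℝ) 1) x := uniqueDiffOn_Icc one_pos x hx
  exact (hcomp.derivWithin hud).symm.trans (hid.derivWithin hud)

lemma phi_deriv_eq (j : Fin cc.N) {x : ℝ} (hx : x ∈ Set.Icc (0:ℝ) 1) :
    |deriv (cc.φ j) x| = |deriv cc.f (cc.φ j x)|⁻¹ := by
  have key : |deriv cc.f (cc.φ j x)| * |deriv (cc.φ j) x| = 1 := by
    rw [← abs_mul, mul_eq_one cc j hx, abs_one]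
  exact eq_inv_of_mul_eq_one_right key

lemma phi_deriv_bounds (j : Fin cc.N) {x : ℝ} (hx : x ∈ Set.Icc (0:ℝ) 1) :
    cc.B⁻¹ ≤ |deriv (cc.φ j) x| ∧ |deriv (cc.φ j) x| ≤ cc.b⁻¹ := by
  have hmem : cc.φ j x ∈ ⋃ i, cc.Jsub i := Set.mem_iUnion.2 ⟨j, cc.hφ_maps j x hx⟩
  obtain ⟨h1, h2⟩ := fderiv_bounds cc hmem
  have hpos : 0 < |deriv cc.f (cc.φ j x)| := lt_of_lt_of_le (b_pos cc) h1
  rw [phi_deriv_eq cc j hx]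
  exact ⟨inv_anti₀ hpos h2, inv_anti₀ (b_pos cc) h1⟩

/-- The chain-rule derivative of `wordMap σ`. -/
def dW : List (Fin cc.N) → ℝ → ℝ
  | [] => fun _ => 1
  | j :: ρ => fun x => deriv (cc.φ j) (cc.wordMap ρ x) * dW ρ x

lemma wordMap_mem : ∀ (σ : List (Fin cc.N)), ∀ x ∈ Set.Icc (0:ℝ) 1,
    cc.wordMap σ x ∈ Set.Icc (0:ℝ) 1
  | [], x, hx => hx
  | j :: ρ, x, hx =>
    cc.hJsub_sub j (cc.hφ_maps j _ (wordMap_mem ρ x hx))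

lemma wordMap_hasDerivAt : ∀ (σ : List (Fin cc.N)), ∀ x ∈ Set.Icc (0:ℝ) 1,
    HasDerivAt (cc.wordMap σ) (dW cc σ x) x
  | [], x, hx => by simpa [CookieCutter.wordMap, dW] using hasDerivAt_id x
  | j :: ρ, x, hx => by
    have hw := wordMap_hasDerivAt ρ x hx
    have hm := wordMap_mem cc ρ x hx
    have hφ : HasDerivAt (cc.φ j) (deriv (cc.φ j) (cc.wordMap ρ x)) (cc.wordMap ρ x) :=
      (cc.hφdiff j _ hm).hasDerivAt
    exact hφ.comp x hw

lemma wordMap_deriv_eq (σ : List (Fin cc.N)) {x : ℝ} (hx : x ∈ Set.Icc (0:ℝ) 1) :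
    deriv (cc.wordMap σ) x = dW cc σ x :=
  (wordMap_hasDerivAt cc σ x hx).deriv

lemma dW_pos : ∀ (σ : List (Fin cc.N)), ∀ x ∈ Set.Icc (0:ℝ) 1, 0 < |dW cc σ x|
  | [], x, hx => by simp [dW]
  | j :: ρ, x, hx => by
    have h1 : 0 < |deriv (cc.φ j) (cc.wordMap ρ x)| :=
      lt_of_lt_of_le (inv_pos.2 (B_pos cc))
        (phi_deriv_bounds cc j (wordMap_mem cc ρ x hx)).1
    have h2 := dW_pos ρ x hx
    simpa [dW, abs_mul] using mul_pos h1 h2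

lemma phi_lip (j : Fin cc.N) {u v : ℝ} (hu : u ∈ Set.Icc (0:ℝ) 1)
    (hv : v ∈ Set.Icc (0:ℝ) 1) :
    |cc.φ j u - cc.φ j v| ≤ cc.b⁻¹ * |u - v| := by
  have := Convex.norm_image_sub_le_of_norm_deriv_le (f := cc.φ j) (s := Set.Icc (0:ℝ) 1)
    (fun z hz => cc.hφdiff j z hz)
    (fun z hz => by rw [Real.norm_eq_abs]; exact (phi_deriv_bounds cc j hz).2)
    (convex_Icc 0 1) hv hu
  simpa [Real.norm_eq_abs] using this

lemma wordMap_lip : ∀ (σ : List (Fin cc.N)), ∀ u ∈ Set.Icc (0:ℝ) 1,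
    ∀ v ∈ Set.Icc (0:ℝ) 1,
    |cc.wordMap σ u - cc.wordMap σ v| ≤ cc.b⁻¹ ^ σ.length * |u - v|
  | [], u, hu, v, hv => by simp [CookieCutter.wordMap]
  | j :: ρ, u, hu, v, hv => by
    have h1 := phi_lip cc j (wordMap_mem cc ρ u hu) (wordMap_mem cc ρ v hv)
    have h2 := wordMap_lip ρ u hu v hv
    have hb' : (0:ℝ) ≤ cc.b⁻¹ := inv_nonneg.2 (b_pos cc).le
    calc |cc.wordMap (j :: ρ) u - cc.wordMap (j :: ρ) v|
        ≤ cc.b⁻¹ * |cc.wordMap ρ u - cc.wordMap ρ v| := h1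
      _ ≤ cc.b⁻¹ * (cc.b⁻¹ ^ ρ.length * |u - v|) := by
          exact mul_le_mul_of_nonneg_left h2 hb'
      _ = cc.b⁻¹ ^ (j :: ρ).length * |u - v| := by
          rw [List.length_cons, pow_succ]; ring

lemma phi_ratio (j : Fin cc.N) {u v : ℝ} (hu : u ∈ Set.Icc (0:ℝ) 1)
    (hv : v ∈ Set.Icc (0:ℝ) 1) :
    |deriv (cc.φ j) u| ≤
      Real.exp (cc.c * |cc.φ j u - cc.φ j v| ^ cc.γ) * |deriv (cc.φ j) v| := by
  set a := cc.φ j u with ha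
  set e := cc.φ j v with he
  have hau : a ∈ cc.Jsub j := cc.hφ_maps j u hu
  have hev : e ∈ cc.Jsub j := cc.hφ_maps j v hv
  have hma : a ∈ ⋃ i, cc.Jsub i := Set.mem_iUnion.2 ⟨j, hau⟩
  have hme : e ∈ ⋃ i, cc.Jsub i := Set.mem_iUnion.2 ⟨j, hev⟩
  have hfa := fderiv_bounds cc hma
  have hfe := fderiv_bounds cc hme
  have hpa : 0 < |deriv cc.f a| := lt_of_lt_of_le (b_pos cc) hfa.1
  have hpe : 0 < |deriv cc.f e| := lt_of_lt_of_le (b_pos cc) hfe.1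
  set T := cc.c * |a - e| ^ cc.γ with hT
  have hTnn : 0 ≤ T :=
    mul_nonneg cc.hc.le (Real.rpow_nonneg (abs_nonneg _) _)
  -- |f' e| ≤ exp T * |f' a|
  have hdiff : |deriv cc.f e| - |deriv cc.f a| ≤ T := by
    have h := cc.hHolder j e hev a hau
    have habs : |deriv cc.f e| - |deriv cc.f a| ≤ |deriv cc.f e - deriv cc.f a| :=
      abs_sub_abs_le_abs_sub _ _
    have : |e - a| = |a - e| := abs_sub_comm _ _
    rw [hT, ← this]
    exact habs.trans h
  have hkey : |deriv cc.f e| ≤ Real.exp T * |deriv cc.f a| := by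
    have h1 : |deriv cc.f e| ≤ |deriv cc.f a| + T := by linarith
    have h2 : |deriv cc.f a| + T ≤ |deriv cc.f a| + |deriv cc.f a| * T := by
      nlinarith [hfa.1, cc.hb1]
    have h3 : |deriv cc.f a| * (T + 1) ≤ |deriv cc.f a| * Real.exp T :=
      mul_le_mul_of_nonneg_left (Real.add_one_le_exp T) hpa.le
    nlinarith
  rw [phi_deriv_eq cc j hu, phi_deriv_eq cc j hv, ← ha, ← he]
  have hdivpos : 0 < |deriv cc.f e| / Real.exp T :=
    div_pos hpe (Real.exp_pos T)
  have hstep : |deriv cc.f e| / Real.exp T ≤ |deriv cc.f a| :=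
    (div_le_iff₀ (Real.exp_pos T)).2 (by linarith [hkey, mul_comm (Real.exp T) |deriv cc.f a|])
  have := inv_anti₀ hdivpos hstep
  rwa [inv_div, div_eq_mul_inv] at this

lemma r_lt_one : cc.b⁻¹ ^ cc.γ < 1 :=
  Real.rpow_lt_one (inv_nonneg.2 (b_pos cc).le)
    (inv_lt_one_of_one_lt₀ cc.hb1) cc.hγ.1

lemma r_nonneg : 0 ≤ cc.b⁻¹ ^ cc.γ := Real.rpow_nonneg (inv_nonneg.2 (b_pos cc).le) _

lemma pow_rpow_comm (t : ℝ) (ht : 0 ≤ t) (m : ℕ) :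
    ((t ^ m : ℝ)) ^ cc.γ = (t ^ cc.γ) ^ m := by
  rw [← Real.rpow_natCast t m, ← Real.rpow_mul ht, mul_comm, Real.rpow_mul ht,
    Real.rpow_natCast]

lemma dW_ratio : ∀ (σ : List (Fin cc.N)), ∀ x ∈ Set.Icc (0:ℝ) 1,
    ∀ y ∈ Set.Icc (0:ℝ) 1,
    |dW cc σ x| ≤
      Real.exp (∑ k ∈ Finset.range σ.length, cc.c * (cc.b⁻¹ ^ cc.γ) ^ (k + 1)) *
        |dW cc σ y|
  | [], x, hx, y, hy => by simp [dW]
  | j :: ρ, x, hx, y, hy => by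
    set r := cc.b⁻¹ ^ cc.γ with hr
    set n := ρ.length with hn
    have hwx := wordMap_mem cc ρ x hx
    have hwy := wordMap_mem cc ρ y hy
    have hIH := dW_ratio ρ x hx y hy
    have hφr := phi_ratio cc j hwx hwy
    -- bound the Hölder term
    have hlip : |cc.φ j (cc.wordMap ρ x) - cc.φ j (cc.wordMap ρ y)| ≤ cc.b⁻¹ ^ (n + 1) := by
      have h1 := phi_lip cc j hwx hwy
      have h2 := wordMap_lip cc ρ x hx y hy
      have hb' : (0:ℝ) ≤ cc.b⁻¹ := inv_nonneg.2 (b_pos cc).le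
      have hxy : |x - y| ≤ 1 := by
        rw [abs_le]; constructor <;> [linarith [hx.1, hy.2]; linarith [hx.2, hy.1]]
      calc |cc.φ j (cc.wordMap ρ x) - cc.φ j (cc.wordMap ρ y)|
          ≤ cc.b⁻¹ * |cc.wordMap ρ x - cc.wordMap ρ y| := h1
        _ ≤ cc.b⁻¹ * (cc.b⁻¹ ^ n * |x - y|) := mul_le_mul_of_nonneg_left h2 hb'
        _ ≤ cc.b⁻¹ * (cc.b⁻¹ ^ n * 1) := by
            apply mul_le_mul_of_nonneg_left _ hb'
            exact mul_le_mul_of_nonneg_left hxy (pow_nonneg hb' n)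
        _ = cc.b⁻¹ ^ (n + 1) := by rw [pow_succ]; ring
    have hterm : cc.c * |cc.φ j (cc.wordMap ρ x) - cc.φ j (cc.wordMap ρ y)| ^ cc.γ ≤
        cc.c * r ^ (n + 1) := by
      apply mul_le_mul_of_nonneg_left _ cc.hc.le
      calc |cc.φ j (cc.wordMap ρ x) - cc.φ j (cc.wordMap ρ y)| ^ cc.γ
          ≤ (cc.b⁻¹ ^ (n + 1)) ^ cc.γ :=
            Real.rpow_le_rpow (abs_nonneg _) hlip cc.hγ.1.le
        _ = r ^ (n + 1) := pow_rpow_comm cc cc.b⁻¹ (inv_nonneg.2 (b_pos cc).le) (n + 1)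
    have hφr' : |deriv (cc.φ j) (cc.wordMap ρ x)| ≤
        Real.exp (cc.c * r ^ (n + 1)) * |deriv (cc.φ j) (cc.wordMap ρ y)| :=
      hφr.trans (mul_le_mul_of_nonneg_right (Real.exp_le_exp.2 hterm) (abs_nonneg _))
    have habs : |dW cc (j :: ρ) x| =
        |deriv (cc.φ j) (cc.wordMap ρ x)| * |dW cc ρ x| := by
      rw [show dW cc (j :: ρ) x = deriv (cc.φ j) (cc.wordMap ρ x) * dW cc ρ x from rfl,
        abs_mul]
    have habsy : |dW cc (j :: ρ) y| =
        |deriv (cc.φ j) (cc.wordMap ρ y)| * |dW cc ρ y| := by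
      rw [show dW cc (j :: ρ) y = deriv (cc.φ j) (cc.wordMap ρ y) * dW cc ρ y from rfl,
        abs_mul]
    rw [habs, habsy]
    have hmul : |deriv (cc.φ j) (cc.wordMap ρ x)| * |dW cc ρ x| ≤
        (Real.exp (cc.c * r ^ (n + 1)) * |deriv (cc.φ j) (cc.wordMap ρ y)|) *
          (Real.exp (∑ k ∈ Finset.range n, cc.c * r ^ (k + 1)) * |dW cc ρ y|) :=
      mul_le_mul hφr' hIH (abs_nonneg _)
        (mul_nonneg (Real.exp_pos _).le (abs_nonneg _))
    refine hmul.trans (le_of_eq ?_)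
    rw [show (j :: ρ).length = n + 1 from rfl, Finset.sum_range_succ, Real.exp_add]
    ring

lemma sum_le_logxi (n : ℕ) :
    ∑ k ∈ Finset.range n, cc.c * (cc.b⁻¹ ^ cc.γ) ^ (k + 1) ≤
      cc.c / (cc.b ^ cc.γ - 1) := by
  set r := cc.b⁻¹ ^ cc.γ with hr
  have hr0 : 0 ≤ r := r_nonneg cc
  have hr1 : r < 1 := r_lt_one cc
  have hgeom : ∑ k ∈ Finset.range n, r ^ k ≤ (1 - r)⁻¹ := by
    have := Summable.sum_le_tsum (Finset.range n) (fun i _ => pow_nonneg hr0 i)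
      (summable_geometric_of_lt_one hr0 hr1)
    rwa [tsum_geometric_of_lt_one hr0 hr1] at this
  have hsum : ∑ k ∈ Finset.range n, cc.c * r ^ (k + 1) =
      cc.c * r * ∑ k ∈ Finset.range n, r ^ k := by
    rw [Finset.mul_sum]
    congr 1; ext k; rw [pow_succ]; ring
  rw [hsum]
  have hbγ : 1 < cc.b ^ cc.γ :=
    Real.one_lt_rpow_iff_of_pos (b_pos cc) |>.2 (Or.inl ⟨cc.hb1, cc.hγ.1⟩)
  have hreq : r = (cc.b ^ cc.γ)⁻¹ := Real.inv_rpow (b_pos cc).le cc.γ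
  have hkey : r * (1 - r)⁻¹ = (cc.b ^ cc.γ - 1)⁻¹ := by
    rw [hreq]
    have h1 : (0:ℝ) < cc.b ^ cc.γ := lt_trans one_pos hbγ
    field_simp
  calc cc.c * r * ∑ k ∈ Finset.range n, r ^ k
      ≤ cc.c * r * (1 - r)⁻¹ := by
        apply mul_le_mul_of_nonneg_left hgeom (mul_nonneg cc.hc.le hr0)
    _ = cc.c * (r * (1 - r)⁻¹) := by ring
    _ = cc.c / (cc.b ^ cc.γ - 1) := by rw [hkey, div_eq_mul_inv]

lemma dW_distortion (σ : List (Fin cc.N)) {x y : ℝ} (hx : x ∈ Set.Icc (0:ℝ) 1)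
    (hy : y ∈ Set.Icc (0:ℝ) 1) :
    |dW cc σ x| ≤ cc.xi * |dW cc σ y| := by
  refine (dW_ratio cc σ x hx y hy).trans ?_
  apply mul_le_mul_of_nonneg_right _ (abs_nonneg _)
  exact Real.exp_le_exp.2 (sum_le_logxi cc σ.length)

end CookieCutterAux
theorem deriv_comparable_diam (cc : CookieCutter) :
    ∀ σ : List (Fin cc.N), σ ≠ [] → ∀ x ∈ Set.Icc (0:ℝ) 1,
      cc.xi⁻¹ * cc.diamJ σ ≤ |deriv (cc.wordMap σ) x| ∧
      |deriv (cc.wordMap σ) x| ≤ cc.xi * cc.diamJ σ := by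
  intro σ _ x hx
  open CookieCutterAux in
  rw [wordMap_deriv_eq cc σ hx]
  set g := cc.wordMap σ with hg
  have hcont : ContinuousOn g (Set.Icc 0 1) := fun z hz =>
    ((CookieCutterAux.wordMap_hasDerivAt cc σ z hz).differentiableAt.continuousAt).continuousWithinAt
  have hbdd : Bornology.IsBounded (cc.Jc σ) :=
    (isCompact_Icc.image_of_continuousOn hcont).isBounded
  have hxipos : 0 < cc.xi := Real.exp_pos _
  have hdiamJ : cc.diamJ σ = Metric.diam (g '' Set.Icc 0 1) := rfl
  have hJc : cc.Jc σ = g '' Set.Icc 0 1 := rfl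
  constructor
  · -- lower bound
    have hdiam : cc.diamJ σ ≤ cc.xi * |CookieCutterAux.dW cc σ x| := by
      rw [hdiamJ]
      apply Metric.diam_le_of_forall_dist_le
        (mul_nonneg hxipos.le (abs_nonneg _))
      rintro p ⟨s, hs, rfl⟩ q ⟨t, ht, rfl⟩
      have hst : |s - t| ≤ 1 := by
        rw [abs_le]; constructor <;> [linarith [hs.1, ht.2]; linarith [hs.2, ht.1]]
      have hmvt := Convex.norm_image_sub_le_of_norm_deriv_le (f := g)
        (s := Set.Icc (0:ℝ) 1)
        (fun z hz => (CookieCutterAux.wordMap_hasDerivAt cc σ z hz).differentiableAt)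
        (fun z hz => by
          rw [Real.norm_eq_abs, hg, CookieCutterAux.wordMap_deriv_eq cc σ hz]
          exact CookieCutterAux.dW_distortion cc σ hz hx)
        (convex_Icc 0 1) ht hs
      rw [Real.dist_eq]
      calc |g s - g t| ≤ (cc.xi * |CookieCutterAux.dW cc σ x|) * |s - t| := by
            simpa [Real.norm_eq_abs] using hmvt
        _ ≤ (cc.xi * |CookieCutterAux.dW cc σ x|) * 1 :=
            mul_le_mul_of_nonneg_left hst
              (mul_nonneg hxipos.le (abs_nonneg _))
        _ = cc.xi * |CookieCutterAux.dW cc σ x| := mul_one _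
    exact (inv_mul_le_iff₀ hxipos).2 hdiam
  · -- upper bound
    obtain ⟨z, hz, hzeq⟩ := exists_hasDerivAt_eq_slope g (CookieCutterAux.dW cc σ)
      one_pos hcont
      (fun z hz => CookieCutterAux.wordMap_hasDerivAt cc σ z (Set.Ioo_subset_Icc_self hz))
    have hzIcc : z ∈ Set.Icc (0:ℝ) 1 := Set.Ioo_subset_Icc_self hz
    have h1 : |CookieCutterAux.dW cc σ z| ≤ cc.diamJ σ := by
      rw [hzeq]
      simp only [sub_zero, div_one]
      have h0m : g 0 ∈ cc.Jc σ := by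
        rw [hJc]; exact ⟨0, ⟨le_refl 0, zero_le_one⟩, rfl⟩
      have h1m : g 1 ∈ cc.Jc σ := by
        rw [hJc]; exact ⟨1, ⟨zero_le_one, le_refl 1⟩, rfl⟩
      have := Metric.dist_le_diam_of_mem hbdd h1m h0m
      rw [Real.dist_eq] at this
      exact this.trans_eq (by rw [hdiamJ, hJc])
    calc |CookieCutterAux.dW cc σ x|
        ≤ cc.xi * |CookieCutterAux.dW cc σ z| :=
          CookieCutterAux.dW_distortion cc σ hx hzIcc
      _ ≤ cc.xi * cc.diamJ σ := mul_le_mul_of_nonneg_left h1 hxipos.le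
end
end

section
/- Let s_* and s^* be real numbers with 0 < s_* < h < s^*. Then for all n ≥ 1, one has Σ_{σ∈Ω_n} |J_σ|^{s_*} > ξ^{-3 s_*} and Σ_{σ∈Ω_n} |J_σ|^{s^*} < ξ^{3 s^*}. -/
open MeasureTheory Filter Metric

noncomputable section

namespace CCAux

open Set Real

variable (cc : CookieCutter)

lemma b_pos : (0:ℝ) < cc.b := lt_trans one_pos cc.hb1

lemma b_le_B : cc.b ≤ cc.B := by
  have hN : 0 < cc.N := by have := cc.hN; omega
  obtain ⟨u, v, huv, hJ⟩ := cc.hJsub_interval ⟨0, hN⟩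
  have hx : u ∈ cc.Jsub ⟨0, hN⟩ := by rw [hJ]; exact ⟨le_refl u, huv⟩
  have hxU : u ∈ ⋃ j, cc.Jsub j := Set.mem_iUnion.2 ⟨_, hx⟩
  exact le_trans (cc.hb.1 ⟨u, hxU, rfl⟩) (cc.hB.1 ⟨u, hxU, rfl⟩)

lemma B_pos : (0:ℝ) < cc.B := lt_of_lt_of_le (b_pos cc) (b_le_B cc)

lemma derivf_lb {j : Fin cc.N} {x : ℝ} (hx : x ∈ cc.Jsub j) : cc.b ≤ |deriv cc.f x| :=
  cc.hb.1 ⟨x, Set.mem_iUnion.2 ⟨j, hx⟩, rfl⟩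

lemma derivf_ub {j : Fin cc.N} {x : ℝ} (hx : x ∈ cc.Jsub j) : |deriv cc.f x| ≤ cc.B :=
  cc.hB.1 ⟨x, Set.mem_iUnion.2 ⟨j, hx⟩, rfl⟩

lemma deriv_phi_mul (j : Fin cc.N) {x : ℝ} (hx : x ∈ Set.Icc (0:ℝ) 1) :
    deriv cc.f (cc.φ j x) * deriv (cc.φ j) x = 1 := by
  have hφx := cc.hφ_maps j x hx
  have h1 : HasDerivAt (cc.φ j) (deriv (cc.φ j) x) x := (cc.hφdiff j x hx).hasDerivAt
  have h2 : HasDerivAt cc.f (deriv cc.f (cc.φ j x)) (cc.φ j x) := (cc.hfdiff j _ hφx).hasDerivAt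
  have h3 : HasDerivAt (cc.f ∘ cc.φ j) (deriv cc.f (cc.φ j x) * deriv (cc.φ j) x) x :=
    h2.comp x h1
  have hu : UniqueDiffWithinAt ℝ (Set.Icc (0:ℝ) 1) x := uniqueDiffOn_Icc one_pos x hx
  have h4 : HasDerivWithinAt (fun y : ℝ => y)
      (deriv cc.f (cc.φ j x) * deriv (cc.φ j) x) (Set.Icc (0:ℝ) 1) x :=
    (h3.hasDerivWithinAt).congr (fun y hy => (cc.hφ_rinv j y hy).symm)
      (cc.hφ_rinv j x hx).symm
  have h5 : HasDerivWithinAt (fun y : ℝ => y) 1 (Set.Icc (0:ℝ) 1) x :=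
    (hasDerivAt_id x).hasDerivWithinAt
  rw [← h4.derivWithin hu, h5.derivWithin hu]

lemma abs_deriv_phi (j : Fin cc.N) {x : ℝ} (hx : x ∈ Set.Icc (0:ℝ) 1) :
    |deriv (cc.φ j) x| = |deriv cc.f (cc.φ j x)|⁻¹ := by
  have h := deriv_phi_mul cc j hx
  have h2 : |deriv cc.f (cc.φ j x)| * |deriv (cc.φ j) x| = 1 := by
    rw [← abs_mul, h, abs_one]
  have hpos : (0:ℝ) < |deriv cc.f (cc.φ j x)| :=
    lt_of_lt_of_le (b_pos cc) (derivf_lb cc (cc.hφ_maps j x hx))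
  field_simp at h2 ⊢
  linarith [h2]

lemma abs_deriv_phi_le (j : Fin cc.N) {x : ℝ} (hx : x ∈ Set.Icc (0:ℝ) 1) :
    |deriv (cc.φ j) x| ≤ cc.b⁻¹ := by
  rw [abs_deriv_phi cc j hx]
  exact inv_anti₀ (b_pos cc) (derivf_lb cc (cc.hφ_maps j x hx))

lemma abs_deriv_phi_ge (j : Fin cc.N) {x : ℝ} (hx : x ∈ Set.Icc (0:ℝ) 1) :
    cc.B⁻¹ ≤ |deriv (cc.φ j) x| := by
  rw [abs_deriv_phi cc j hx]
  exact inv_anti₀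
    (lt_of_lt_of_le (b_pos cc) (derivf_lb cc (cc.hφ_maps j x hx)))
    (derivf_ub cc (cc.hφ_maps j x hx))

end CCAux

namespace CCAux
open Set Real
variable (cc : CookieCutter)

lemma wordMap_nil (x : ℝ) : cc.wordMap [] x = x := rfl

lemma wordMap_cons (j : Fin cc.N) (τ : List (Fin cc.N)) (x : ℝ) :
    cc.wordMap (j :: τ) x = cc.φ j (cc.wordMap τ x) := rfl

lemma wordMap_maps : ∀ (σ : List (Fin cc.N)), ∀ x ∈ Set.Icc (0:ℝ) 1,
    cc.wordMap σ x ∈ Set.Icc (0:ℝ) 1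
  | [], x, hx => hx
  | j :: τ, x, hx => cc.hJsub_sub j (cc.hφ_maps j _ (wordMap_maps τ x hx))

lemma wordMap_diff : ∀ (σ : List (Fin cc.N)), ∀ x ∈ Set.Icc (0:ℝ) 1,
    DifferentiableAt ℝ (cc.wordMap σ) x
  | [], _, _ => differentiableAt_id
  | j :: τ, x, hx =>
    DifferentiableAt.comp x (cc.hφdiff j _ (wordMap_maps cc τ x hx)) (wordMap_diff τ x hx)

lemma deriv_wordMap_cons (j : Fin cc.N) (τ : List (Fin cc.N)) {x : ℝ}
    (hx : x ∈ Set.Icc (0:ℝ) 1) :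
    deriv (cc.wordMap (j :: τ)) x
      = deriv (cc.φ j) (cc.wordMap τ x) * deriv (cc.wordMap τ) x := by
  have h1 : HasDerivAt (cc.wordMap τ) (deriv (cc.wordMap τ) x) x :=
    (wordMap_diff cc τ x hx).hasDerivAt
  have h2 : HasDerivAt (cc.φ j) (deriv (cc.φ j) (cc.wordMap τ x)) (cc.wordMap τ x) :=
    (cc.hφdiff j _ (wordMap_maps cc τ x hx)).hasDerivAt
  exact (h2.comp x h1).deriv

lemma wordMap_append (σ τ : List (Fin cc.N)) (x : ℝ) :
    cc.wordMap (σ ++ τ) x = cc.wordMap σ (cc.wordMap τ x) := by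
  induction σ with
  | nil => rfl
  | cons j σ ih => simp only [List.cons_append, wordMap_cons, ih]

lemma deriv_wordMap_append (σ τ : List (Fin cc.N)) {x : ℝ} (hx : x ∈ Set.Icc (0:ℝ) 1) :
    deriv (cc.wordMap (σ ++ τ)) x
      = deriv (cc.wordMap σ) (cc.wordMap τ x) * deriv (cc.wordMap τ) x := by
  have h1 : HasDerivAt (cc.wordMap τ) (deriv (cc.wordMap τ) x) x :=
    (wordMap_diff cc τ x hx).hasDerivAt
  have h2 : HasDerivAt (cc.wordMap σ) (deriv (cc.wordMap σ) (cc.wordMap τ x))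
      (cc.wordMap τ x) := (wordMap_diff cc σ _ (wordMap_maps cc τ x hx)).hasDerivAt
  have h3 := (h2.comp x h1).deriv
  rw [← h3]
  congr 1
  funext y
  exact wordMap_append cc σ τ y

lemma abs_deriv_wordMap_le : ∀ (σ : List (Fin cc.N)), ∀ x ∈ Set.Icc (0:ℝ) 1,
    |deriv (cc.wordMap σ) x| ≤ cc.b⁻¹ ^ σ.length := by
  intro σ
  induction σ with
  | nil =>
    intro x _
    have h : cc.wordMap ([] : List (Fin cc.N)) = id := rfl
    rw [h]; simp
  | cons j τ ih =>
    intro x hx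
    rw [deriv_wordMap_cons cc j τ hx, abs_mul]
    calc |deriv (cc.φ j) (cc.wordMap τ x)| * |deriv (cc.wordMap τ) x|
        ≤ cc.b⁻¹ * cc.b⁻¹ ^ τ.length :=
          mul_le_mul (abs_deriv_phi_le cc j (wordMap_maps cc τ x hx)) (ih x hx)
            (abs_nonneg _) (inv_nonneg.2 (b_pos cc).le)
      _ = cc.b⁻¹ ^ (j :: τ).length := by rw [List.length_cons, pow_succ]; ring

lemma abs_deriv_wordMap_ge : ∀ (σ : List (Fin cc.N)), ∀ x ∈ Set.Icc (0:ℝ) 1,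
    cc.B⁻¹ ^ σ.length ≤ |deriv (cc.wordMap σ) x| := by
  intro σ
  induction σ with
  | nil =>
    intro x _
    have h : cc.wordMap ([] : List (Fin cc.N)) = id := rfl
    rw [h]; simp
  | cons j τ ih =>
    intro x hx
    rw [deriv_wordMap_cons cc j τ hx, abs_mul]
    calc cc.B⁻¹ ^ (j :: τ).length = cc.B⁻¹ * cc.B⁻¹ ^ τ.length := by
          rw [List.length_cons, pow_succ]; ring
      _ ≤ |deriv (cc.φ j) (cc.wordMap τ x)| * |deriv (cc.wordMap τ) x| :=
          mul_le_mul (abs_deriv_phi_ge cc j (wordMap_maps cc τ x hx)) (ih x hx)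
            (pow_nonneg (inv_nonneg.2 (B_pos cc).le) _) (abs_nonneg _)

lemma abs_deriv_wordMap_pos (σ : List (Fin cc.N)) {x : ℝ} (hx : x ∈ Set.Icc (0:ℝ) 1) :
    0 < |deriv (cc.wordMap σ) x| :=
  lt_of_lt_of_le (pow_pos (inv_pos.2 (B_pos cc)) _) (abs_deriv_wordMap_ge cc σ x hx)

lemma wordMap_dist_le (σ : List (Fin cc.N)) {C : ℝ}
    (hC : ∀ x ∈ Set.Icc (0:ℝ) 1, |deriv (cc.wordMap σ) x| ≤ C)
    {x y : ℝ} (hx : x ∈ Set.Icc (0:ℝ) 1) (hy : y ∈ Set.Icc (0:ℝ) 1) :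
    |cc.wordMap σ y - cc.wordMap σ x| ≤ C * |y - x| := by
  have := (convex_Icc (0:ℝ) 1).norm_image_sub_le_of_norm_hasDerivWithin_le
    (f := cc.wordMap σ) (f' := fun z => deriv (cc.wordMap σ) z)
    (fun z hz => ((wordMap_diff cc σ z hz).hasDerivAt).hasDerivWithinAt)
    (fun z hz => by simpa [Real.norm_eq_abs] using hC z hz) hx hy
  simpa [Real.norm_eq_abs] using this

lemma wordMap_lipschitz (σ : List (Fin cc.N)) {x y : ℝ}
    (hx : x ∈ Set.Icc (0:ℝ) 1) (hy : y ∈ Set.Icc (0:ℝ) 1) :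
    |cc.wordMap σ y - cc.wordMap σ x| ≤ cc.b⁻¹ ^ σ.length * |y - x| :=
  wordMap_dist_le cc σ (abs_deriv_wordMap_le cc σ) hx hy

end CCAux

namespace CCAux
open Set Real
variable (cc : CookieCutter)

/-- The ratio `r = b^{-γ}`. -/
def rr : ℝ := cc.b ^ (-cc.γ)

lemma rr_pos : 0 < rr cc := Real.rpow_pos_of_pos (b_pos cc) _

lemma rr_lt_one : rr cc < 1 :=
  Real.rpow_lt_one_of_one_lt_of_neg cc.hb1 (neg_neg_of_pos cc.hγ.1)

/-- Partial geometric sum `∑_{k=1}^n r^k`. -/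
def Sgeo (n : ℕ) : ℝ := ∑ k ∈ Finset.range n, (rr cc) ^ (k + 1)

lemma Sgeo_zero : Sgeo cc 0 = 0 := by simp [Sgeo]

lemma Sgeo_succ (n : ℕ) : Sgeo cc (n + 1) = Sgeo cc n + (rr cc) ^ (n + 1) := by
  simp [Sgeo, Finset.sum_range_succ]

lemma one_lt_brpow : 1 < cc.b ^ cc.γ :=
  Real.one_lt_rpow_iff_of_pos (b_pos cc) |>.2 (Or.inl ⟨cc.hb1, cc.hγ.1⟩)

lemma Sgeo_le (n : ℕ) : Sgeo cc n ≤ 1 / (cc.b ^ cc.γ - 1) := by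
  have hr0 := (rr_pos cc).le
  have hr1 := rr_lt_one cc
  have h1 : Sgeo cc n = rr cc * ∑ k ∈ Finset.range n, (rr cc) ^ k := by
    rw [Finset.mul_sum]; exact Finset.sum_congr rfl fun k _ => by ring
  have h2 : ∑ k ∈ Finset.range n, (rr cc) ^ k ≤ 1 / (1 - rr cc) := by
    rw [le_div_iff₀ (by linarith)]
    have hg : (∑ i ∈ Finset.range n, (rr cc) ^ i) * (rr cc - 1) = (rr cc) ^ n - 1 :=
      geom_sum_mul _ _
    nlinarith [pow_nonneg hr0 n]
  have h3 : Sgeo cc n ≤ rr cc * (1 / (1 - rr cc)) := by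
    rw [h1]; exact mul_le_mul_of_nonneg_left h2 hr0
  have hrr : rr cc = (cc.b ^ cc.γ)⁻¹ := Real.rpow_neg (b_pos cc).le _
  have hbp := one_lt_brpow cc
  rw [hrr] at h3
  calc Sgeo cc n ≤ (cc.b ^ cc.γ)⁻¹ * (1 / (1 - (cc.b ^ cc.γ)⁻¹)) := h3
    _ = 1 / (cc.b ^ cc.γ - 1) := by
        have h0 : (0:ℝ) < cc.b ^ cc.γ := by linarith
        field_simp

lemma exp_Sgeo_le_xi (n : ℕ) : Real.exp (cc.c * Sgeo cc n) ≤ cc.xi := by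
  unfold CookieCutter.xi
  apply Real.exp_le_exp.2
  have := Sgeo_le cc n
  have hc := cc.hc
  calc cc.c * Sgeo cc n ≤ cc.c * (1 / (cc.b ^ cc.γ - 1)) :=
        mul_le_mul_of_nonneg_left this hc.le
    _ = cc.c / (cc.b ^ cc.γ - 1) := by ring

lemma one_lt_xi : 1 < cc.xi := by
  unfold CookieCutter.xi
  exact Real.one_lt_exp_iff.2 (div_pos cc.hc (by linarith [one_lt_brpow cc]))

lemma xi_pos : 0 < cc.xi := lt_trans one_pos (one_lt_xi cc)

/-- The key Hölder distortion step for a single letter. -/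
lemma abs_derivf_ratio (j : Fin cc.N) {u v : ℝ} (hu : u ∈ Set.Icc (0:ℝ) 1)
    (hv : v ∈ Set.Icc (0:ℝ) 1) {δ : ℝ} (hδ0 : 0 ≤ δ) (huv : |u - v| ≤ δ) :
    |deriv cc.f (cc.φ j v)| ≤ Real.exp (cc.c * (cc.b⁻¹ * δ) ^ cc.γ) * |deriv cc.f (cc.φ j u)| := by
  set p := cc.φ j u with hp
  set q := cc.φ j v with hq
  have hpJ : p ∈ cc.Jsub j := cc.hφ_maps j u hu
  have hqJ : q ∈ cc.Jsub j := cc.hφ_maps j v hv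
  have hpq : |p - q| ≤ cc.b⁻¹ * δ := by
    have h1 : |cc.φ j u - cc.φ j v| ≤ cc.b⁻¹ ^ ([j] : List (Fin cc.N)).length * |u - v| := by
      have := wordMap_lipschitz cc [j] hv hu
      simpa [wordMap_cons, wordMap_nil, zero_add, pow_one] using this
    norm_num at h1
    calc |p - q| ≤ cc.b⁻¹ * |u - v| := h1
      _ ≤ cc.b⁻¹ * δ := mul_le_mul_of_nonneg_left huv (inv_nonneg.2 (b_pos cc).le)
  have hfp : cc.b ≤ |deriv cc.f p| := derivf_lb cc hpJ
  have hb1 := cc.hb1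
  have hkey : |deriv cc.f q| ≤ |deriv cc.f p| + cc.c * (cc.b⁻¹ * δ) ^ cc.γ := by
    have h1 : |deriv cc.f q| - |deriv cc.f p| ≤ |deriv cc.f q - deriv cc.f p| :=
      abs_sub_abs_le_abs_sub _ _
    have h2 := cc.hHolder j q hqJ p hpJ
    have h3 : |q - p| ^ cc.γ ≤ (cc.b⁻¹ * δ) ^ cc.γ := by
      apply Real.rpow_le_rpow (abs_nonneg _) _ cc.hγ.1.le
      rw [abs_sub_comm]; exact hpq
    have h4 : cc.c * |q - p| ^ cc.γ ≤ cc.c * (cc.b⁻¹ * δ) ^ cc.γ :=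
      mul_le_mul_of_nonneg_left h3 cc.hc.le
    linarith
  have hexp : 1 + cc.c * (cc.b⁻¹ * δ) ^ cc.γ ≤ Real.exp (cc.c * (cc.b⁻¹ * δ) ^ cc.γ) := by
    have := Real.add_one_le_exp (cc.c * (cc.b⁻¹ * δ) ^ cc.γ)
    linarith
  have hnn : 0 ≤ cc.c * (cc.b⁻¹ * δ) ^ cc.γ := by
    apply mul_nonneg cc.hc.le
    exact Real.rpow_nonneg (mul_nonneg (inv_nonneg.2 (b_pos cc).le) hδ0) _
  calc |deriv cc.f q| ≤ |deriv cc.f p| + cc.c * (cc.b⁻¹ * δ) ^ cc.γ := hkey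
    _ ≤ |deriv cc.f p| + |deriv cc.f p| * (cc.c * (cc.b⁻¹ * δ) ^ cc.γ) := by
        nlinarith [hfp, hnn]
    _ = (1 + cc.c * (cc.b⁻¹ * δ) ^ cc.γ) * |deriv cc.f p| := by ring
    _ ≤ Real.exp (cc.c * (cc.b⁻¹ * δ) ^ cc.γ) * |deriv cc.f p| :=
        mul_le_mul_of_nonneg_right hexp (abs_nonneg _)

end CCAux

namespace CCAux
open Set Real
variable (cc : CookieCutter)

lemma pow_rpow_eq (n : ℕ) : (cc.b⁻¹ ^ n) ^ cc.γ = rr cc ^ n := by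
  have hb0 : (0:ℝ) ≤ cc.b⁻¹ := inv_nonneg.2 (b_pos cc).le
  rw [← Real.rpow_natCast cc.b⁻¹ n, ← Real.rpow_mul hb0, mul_comm,
    Real.rpow_mul hb0, Real.rpow_natCast]
  congr 1
  rw [rr, Real.rpow_neg (b_pos cc).le, Real.inv_rpow (b_pos cc).le]

lemma distortion : ∀ (σ : List (Fin cc.N)), ∀ x ∈ Set.Icc (0:ℝ) 1, ∀ y ∈ Set.Icc (0:ℝ) 1,
    |deriv (cc.wordMap σ) x| ≤ Real.exp (cc.c * Sgeo cc σ.length) * |deriv (cc.wordMap σ) y| := by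
  intro σ
  induction σ with
  | nil =>
    intro x _ y _
    have h : cc.wordMap ([] : List (Fin cc.N)) = id := rfl
    rw [h]; simp [Sgeo_zero]
  | cons j τ ih =>
    intro x hx y hy
    set n := τ.length with hn
    have hu : cc.wordMap τ x ∈ Set.Icc (0:ℝ) 1 := wordMap_maps cc τ x hx
    have hv : cc.wordMap τ y ∈ Set.Icc (0:ℝ) 1 := wordMap_maps cc τ y hy
    -- distance between intermediate points
    have hxy1 : |x - y| ≤ 1 := by
      rw [abs_sub_le_iff]
      constructor <;> [skip; skip] <;>
        · obtain ⟨hx0, hx1⟩ := hx; obtain ⟨hy0, hy1⟩ := hy; linarith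
    have huv : |cc.wordMap τ x - cc.wordMap τ y| ≤ cc.b⁻¹ ^ n := by
      calc |cc.wordMap τ x - cc.wordMap τ y| ≤ cc.b⁻¹ ^ n * |x - y| :=
            wordMap_lipschitz cc τ hy hx
        _ ≤ cc.b⁻¹ ^ n * 1 :=
            mul_le_mul_of_nonneg_left hxy1 (pow_nonneg (inv_nonneg.2 (b_pos cc).le) _)
        _ = cc.b⁻¹ ^ n := mul_one _
    -- ratio for the new letter
    have hδ0 : (0:ℝ) ≤ cc.b⁻¹ ^ n := pow_nonneg (inv_nonneg.2 (b_pos cc).le) _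
    have hratio := abs_derivf_ratio cc j hu hv hδ0 huv
    have hexp_eq : cc.c * (cc.b⁻¹ * cc.b⁻¹ ^ n) ^ cc.γ = cc.c * rr cc ^ (n + 1) := by
      rw [← pow_succ']
      rw [pow_rpow_eq cc (n+1)]
    rw [hexp_eq] at hratio
    -- from ratio of f' to ratio of φ'
    have hfu : 0 < |deriv cc.f (cc.φ j (cc.wordMap τ x))| :=
      lt_of_lt_of_le (b_pos cc) (derivf_lb cc (cc.hφ_maps j _ hu))
    have hfv : 0 < |deriv cc.f (cc.φ j (cc.wordMap τ y))| :=
      lt_of_lt_of_le (b_pos cc) (derivf_lb cc (cc.hφ_maps j _ hv))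
    have hK : 0 < Real.exp (cc.c * rr cc ^ (n + 1)) := Real.exp_pos _
    have hphi : |deriv (cc.φ j) (cc.wordMap τ x)|
        ≤ Real.exp (cc.c * rr cc ^ (n + 1)) * |deriv (cc.φ j) (cc.wordMap τ y)| := by
      rw [abs_deriv_phi cc j hu, abs_deriv_phi cc j hv]
      rw [inv_le_iff_one_le_mul₀ hfu]
      rw [mul_comm, ← mul_assoc]
      calc (1:ℝ) = |deriv cc.f (cc.φ j (cc.wordMap τ y))|
            * |deriv cc.f (cc.φ j (cc.wordMap τ y))|⁻¹ := by
            field_simp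
        _ ≤ (Real.exp (cc.c * rr cc ^ (n + 1)) * |deriv cc.f (cc.φ j (cc.wordMap τ x))|)
            * |deriv cc.f (cc.φ j (cc.wordMap τ y))|⁻¹ := by
            apply mul_le_mul_of_nonneg_right hratio (inv_nonneg.2 hfv.le)
        _ = |deriv cc.f (cc.φ j (cc.wordMap τ x))| * Real.exp (cc.c * rr cc ^ (n + 1))
            * |deriv cc.f (cc.φ j (cc.wordMap τ y))|⁻¹ := by ring
    -- assemble
    rw [deriv_wordMap_cons cc j τ hx, deriv_wordMap_cons cc j τ hy, abs_mul, abs_mul]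
    have hτ := ih x hx y hy
    calc |deriv (cc.φ j) (cc.wordMap τ x)| * |deriv (cc.wordMap τ) x|
        ≤ (Real.exp (cc.c * rr cc ^ (n + 1)) * |deriv (cc.φ j) (cc.wordMap τ y)|)
          * (Real.exp (cc.c * Sgeo cc n) * |deriv (cc.wordMap τ) y|) :=
          mul_le_mul hphi hτ (abs_nonneg _)
            (mul_nonneg hK.le (abs_nonneg _))
      _ = Real.exp (cc.c * Sgeo cc (n + 1))
          * (|deriv (cc.φ j) (cc.wordMap τ y)| * |deriv (cc.wordMap τ) y|) := by
          rw [Sgeo_succ, mul_add, Real.exp_add]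
          ring
      _ = Real.exp (cc.c * Sgeo cc (List.length (j :: τ)))
          * (|deriv (cc.φ j) (cc.wordMap τ y)| * |deriv (cc.wordMap τ) y|) := by
          rw [List.length_cons]

lemma distortion_xi (σ : List (Fin cc.N)) {x y : ℝ}
    (hx : x ∈ Set.Icc (0:ℝ) 1) (hy : y ∈ Set.Icc (0:ℝ) 1) :
    |deriv (cc.wordMap σ) x| ≤ cc.xi * |deriv (cc.wordMap σ) y| :=
  le_trans (distortion cc σ x hx y hy)
    (mul_le_mul_of_nonneg_right (exp_Sgeo_le_xi cc _) (abs_nonneg _))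

end CCAux

namespace CCAux
open Set Real
variable (cc : CookieCutter)

lemma phinorm_set_nonempty (σ : List (Fin cc.N)) :
    ((fun x => |deriv (cc.wordMap σ) x|) '' Set.Icc 0 1).Nonempty :=
  Set.Nonempty.image _ (Set.nonempty_Icc.2 zero_le_one)

lemma phinorm_set_bdd (σ : List (Fin cc.N)) :
    BddAbove ((fun x => |deriv (cc.wordMap σ) x|) '' Set.Icc 0 1) := by
  refine ⟨cc.b⁻¹ ^ σ.length, ?_⟩
  rintro z ⟨x, hx, rfl⟩
  exact abs_deriv_wordMap_le cc σ x hx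

lemma le_phinorm (σ : List (Fin cc.N)) {x : ℝ} (hx : x ∈ Set.Icc (0:ℝ) 1) :
    |deriv (cc.wordMap σ) x| ≤ cc.φnorm σ :=
  le_csSup (phinorm_set_bdd cc σ) ⟨x, hx, rfl⟩

lemma phinorm_le (σ : List (Fin cc.N)) {M : ℝ}
    (hM : ∀ x ∈ Set.Icc (0:ℝ) 1, |deriv (cc.wordMap σ) x| ≤ M) : cc.φnorm σ ≤ M := by
  apply csSup_le (phinorm_set_nonempty cc σ)
  rintro z ⟨x, hx, rfl⟩
  exact hM x hx

lemma phinorm_pos (σ : List (Fin cc.N)) : 0 < cc.φnorm σ :=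
  lt_of_lt_of_le (abs_deriv_wordMap_pos cc σ (Set.left_mem_Icc.2 zero_le_one))
    (le_phinorm cc σ (Set.left_mem_Icc.2 zero_le_one))

lemma phinorm_le_pow (σ : List (Fin cc.N)) : cc.φnorm σ ≤ cc.b⁻¹ ^ σ.length :=
  phinorm_le cc σ (abs_deriv_wordMap_le cc σ)

lemma phinorm_le_xi_mul (σ : List (Fin cc.N)) {y : ℝ} (hy : y ∈ Set.Icc (0:ℝ) 1) :
    cc.φnorm σ ≤ cc.xi * |deriv (cc.wordMap σ) y| :=
  phinorm_le cc σ (fun x hx => distortion_xi cc σ hx hy)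

lemma phinorm_nil : cc.φnorm [] = 1 := by
  apply le_antisymm
  · apply phinorm_le
    intro x _
    have h : cc.wordMap ([] : List (Fin cc.N)) = id := rfl
    rw [h]; simp
  · have := le_phinorm cc [] (Set.left_mem_Icc.2 zero_le_one)
    have h : cc.wordMap ([] : List (Fin cc.N)) = id := rfl
    rw [h] at this; simpa using this

lemma Jc_subset (σ : List (Fin cc.N)) : cc.Jc σ ⊆ Set.Icc (0:ℝ) 1 := by
  rintro z ⟨x, hx, rfl⟩
  exact wordMap_maps cc σ x hx

lemma Jc_bounded (σ : List (Fin cc.N)) : Bornology.IsBounded (cc.Jc σ) :=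
  (Metric.isBounded_Icc (0:ℝ) 1).subset (Jc_subset cc σ)

lemma diamJ_nonneg (σ : List (Fin cc.N)) : 0 ≤ cc.diamJ σ := Metric.diam_nonneg

lemma diamJ_le_phinorm (σ : List (Fin cc.N)) : cc.diamJ σ ≤ cc.φnorm σ := by
  apply Metric.diam_le_of_forall_dist_le (phinorm_pos cc σ).le
  rintro p ⟨x, hx, rfl⟩ q ⟨y, hy, rfl⟩
  rw [Real.dist_eq]
  have hxy1 : |y - x| ≤ 1 := by
    rw [abs_sub_le_iff]
    obtain ⟨hx0, hx1⟩ := hx; obtain ⟨hy0, hy1⟩ := hy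
    constructor <;> linarith
  calc |cc.wordMap σ x - cc.wordMap σ y|
      ≤ cc.φnorm σ * |x - y| := wordMap_dist_le cc σ (fun z hz => le_phinorm cc σ hz) hy hx
    _ ≤ cc.φnorm σ * 1 := by
        apply mul_le_mul_of_nonneg_left _ (phinorm_pos cc σ).le
        rw [abs_sub_comm]; exact hxy1
    _ = cc.φnorm σ := mul_one _

lemma phinorm_le_xi_mul_diamJ (σ : List (Fin cc.N)) : cc.φnorm σ ≤ cc.xi * cc.diamJ σ := by
  have h01 : (0:ℝ) < 1 := one_pos
  have hcont : ContinuousOn (cc.wordMap σ) (Set.Icc 0 1) :=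
    fun x hx => (wordMap_diff cc σ x hx).continuousAt.continuousWithinAt
  obtain ⟨ζ, hζ, hslope⟩ := exists_hasDerivAt_eq_slope (cc.wordMap σ) (deriv (cc.wordMap σ))
    h01 hcont (fun x hx => (wordMap_diff cc σ x (Set.mem_Icc_of_Ioo hx)).hasDerivAt)
  have hζI : ζ ∈ Set.Icc (0:ℝ) 1 := Set.mem_Icc_of_Ioo hζ
  have h1 : |deriv (cc.wordMap σ) ζ| = |cc.wordMap σ 1 - cc.wordMap σ 0| := by
    rw [hslope]; simp
  have h2 : |cc.wordMap σ 1 - cc.wordMap σ 0| ≤ cc.diamJ σ := by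
    rw [← Real.dist_eq]
    exact Metric.dist_le_diam_of_mem (Jc_bounded cc σ)
      ⟨1, Set.right_mem_Icc.2 zero_le_one, rfl⟩ ⟨0, Set.left_mem_Icc.2 zero_le_one, rfl⟩
  calc cc.φnorm σ ≤ cc.xi * |deriv (cc.wordMap σ) ζ| := phinorm_le_xi_mul cc σ hζI
    _ ≤ cc.xi * cc.diamJ σ := by
        apply mul_le_mul_of_nonneg_left _ (xi_pos cc).le
        rw [h1]; exact h2

lemma phinorm_append_le (σ τ : List (Fin cc.N)) :
    cc.φnorm (σ ++ τ) ≤ cc.φnorm σ * cc.φnorm τ := by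
  apply phinorm_le
  intro x hx
  rw [deriv_wordMap_append cc σ τ hx, abs_mul]
  exact mul_le_mul (le_phinorm cc σ (wordMap_maps cc τ x hx)) (le_phinorm cc τ hx)
    (abs_nonneg _) (phinorm_pos cc σ).le

lemma phinorm_mul_le_xi_append (σ τ : List (Fin cc.N)) :
    cc.φnorm σ * cc.φnorm τ ≤ cc.xi * cc.φnorm (σ ++ τ) := by
  have hσpos := phinorm_pos cc σ
  have key : ∀ x ∈ Set.Icc (0:ℝ) 1,
      |deriv (cc.wordMap τ) x| ≤ cc.xi * cc.φnorm (σ ++ τ) / cc.φnorm σ := by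
    intro x hx
    rw [le_div_iff₀ hσpos]
    have h1 : cc.φnorm σ ≤ cc.xi * |deriv (cc.wordMap σ) (cc.wordMap τ x)| :=
      phinorm_le_xi_mul cc σ (wordMap_maps cc τ x hx)
    have h2 : |deriv (cc.wordMap σ) (cc.wordMap τ x)| * |deriv (cc.wordMap τ) x|
        ≤ cc.φnorm (σ ++ τ) := by
      rw [← abs_mul, ← deriv_wordMap_append cc σ τ hx]
      exact le_phinorm cc _ hx
    calc |deriv (cc.wordMap τ) x| * cc.φnorm σ
        ≤ |deriv (cc.wordMap τ) x| * (cc.xi * |deriv (cc.wordMap σ) (cc.wordMap τ x)|) :=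
          mul_le_mul_of_nonneg_left h1 (abs_nonneg _)
      _ = cc.xi * (|deriv (cc.wordMap σ) (cc.wordMap τ x)| * |deriv (cc.wordMap τ) x|) := by
          ring
      _ ≤ cc.xi * cc.φnorm (σ ++ τ) := mul_le_mul_of_nonneg_left h2 (xi_pos cc).le
  have := phinorm_le cc τ key
  rw [le_div_iff₀ hσpos] at this
  calc cc.φnorm σ * cc.φnorm τ = cc.φnorm τ * cc.φnorm σ := mul_comm _ _
    _ ≤ cc.xi * cc.φnorm (σ ++ τ) := this

lemma xi_inv_phinorm_le_diamJ (σ : List (Fin cc.N)) :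
    cc.xi⁻¹ * cc.φnorm σ ≤ cc.diamJ σ := by
  rw [inv_mul_le_iff₀ (xi_pos cc)]
  exact phinorm_le_xi_mul_diamJ cc σ

end CCAux

namespace CCAux
open Set Real
variable (cc : CookieCutter)

/-- Abbreviation for the partition sums. -/
def Sf (t : ℝ) (n : ℕ) : ℝ := ∑ σ : Fin n → Fin cc.N, cc.φnorm (List.ofFn σ) ^ t

lemma finN_nonempty : Nonempty (Fin cc.N) := ⟨⟨0, by have := cc.hN; omega⟩⟩

lemma Sf_pos (t : ℝ) (n : ℕ) : 0 < Sf cc t n := by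
  haveI := finN_nonempty cc
  apply Finset.sum_pos
  · intro σ _
    exact Real.rpow_pos_of_pos (phinorm_pos cc _) _
  · exact Finset.univ_nonempty

lemma Sf_zero (t : ℝ) : Sf cc t 0 = 1 := by
  have h : ∀ σ : Fin 0 → Fin cc.N, cc.φnorm (List.ofFn σ) ^ t = 1 := by
    intro σ
    rw [List.ofFn_zero, phinorm_nil cc, Real.one_rpow]
  rw [Sf]
  rw [Finset.sum_congr rfl (fun σ _ => h σ), Finset.sum_const]
  simp

lemma Sf_split (g : List (Fin cc.N) → ℝ) (m n : ℕ) :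
    ∑ σ : Fin (m + n) → Fin cc.N, g (List.ofFn σ)
      = ∑ a : Fin m → Fin cc.N, ∑ b : Fin n → Fin cc.N, g (List.ofFn a ++ List.ofFn b) := by
  rw [← Equiv.sum_comp (Fin.appendEquiv m n) (fun σ => g (List.ofFn σ))]
  rw [Fintype.sum_prod_type]
  apply Finset.sum_congr rfl
  intro a _
  apply Finset.sum_congr rfl
  intro b _
  show g (List.ofFn (Fin.append a b)) = _
  rw [List.ofFn_fin_append]

lemma Sf_submul {t : ℝ} (ht : 0 ≤ t) (m n : ℕ) :
    Sf cc t (m + n) ≤ Sf cc t m * Sf cc t n := by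
  simp only [Sf]
  rw [Sf_split cc (fun l => cc.φnorm l ^ t) m n, Finset.sum_mul_sum]
  apply Finset.sum_le_sum
  intro a _
  apply Finset.sum_le_sum
  intro b _
  calc cc.φnorm (List.ofFn a ++ List.ofFn b) ^ t
      ≤ (cc.φnorm (List.ofFn a) * cc.φnorm (List.ofFn b)) ^ t :=
        Real.rpow_le_rpow (phinorm_pos cc _).le (phinorm_append_le cc _ _) ht
    _ = cc.φnorm (List.ofFn a) ^ t * cc.φnorm (List.ofFn b) ^ t :=
        Real.mul_rpow (phinorm_pos cc _).le (phinorm_pos cc _).le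

lemma Sf_supermul {t : ℝ} (ht : 0 ≤ t) (m n : ℕ) :
    Sf cc t m * Sf cc t n ≤ cc.xi ^ t * Sf cc t (m + n) := by
  simp only [Sf]
  rw [Sf_split cc (fun l => cc.φnorm l ^ t) m n, Finset.sum_mul_sum, Finset.mul_sum]
  apply Finset.sum_le_sum
  intro a _
  rw [Finset.mul_sum]
  apply Finset.sum_le_sum
  intro b _
  calc cc.φnorm (List.ofFn a) ^ t * cc.φnorm (List.ofFn b) ^ t
      = (cc.φnorm (List.ofFn a) * cc.φnorm (List.ofFn b)) ^ t :=
        (Real.mul_rpow (phinorm_pos cc _).le (phinorm_pos cc _).le).symm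
    _ ≤ (cc.xi * cc.φnorm (List.ofFn a ++ List.ofFn b)) ^ t :=
        Real.rpow_le_rpow (mul_nonneg (phinorm_pos cc _).le (phinorm_pos cc _).le)
          (phinorm_mul_le_xi_append cc _ _) ht
    _ = cc.xi ^ t * cc.φnorm (List.ofFn a ++ List.ofFn b) ^ t :=
        Real.mul_rpow (xi_pos cc).le (phinorm_pos cc _).le

lemma Sf_pow_le {t : ℝ} (ht : 0 ≤ t) (n : ℕ) : ∀ k : ℕ, Sf cc t (k * n) ≤ Sf cc t n ^ k := by
  intro k
  induction k with
  | zero => simp [Sf_zero cc t]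
  | succ k ih =>
    have h1 : (k + 1) * n = k * n + n := by ring
    rw [h1]
    calc Sf cc t (k * n + n) ≤ Sf cc t (k * n) * Sf cc t n := Sf_submul cc ht _ _
      _ ≤ Sf cc t n ^ k * Sf cc t n :=
        mul_le_mul_of_nonneg_right ih (Sf_pos cc t n).le
      _ = Sf cc t n ^ (k + 1) := by ring

lemma le_Sf_pow {t : ℝ} (ht : 0 ≤ t) (n : ℕ) :
    ∀ k : ℕ, Sf cc t n ^ k ≤ (cc.xi ^ t) ^ k * Sf cc t (k * n) := by
  intro k
  induction k with
  | zero => simp [Sf_zero cc t]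
  | succ k ih =>
    have h1 : (k + 1) * n = k * n + n := by ring
    have hxt : (0:ℝ) ≤ cc.xi ^ t := (Real.rpow_pos_of_pos (xi_pos cc) t).le
    rw [h1]
    calc Sf cc t n ^ (k + 1) = Sf cc t n ^ k * Sf cc t n := by ring
      _ ≤ ((cc.xi ^ t) ^ k * Sf cc t (k * n)) * Sf cc t n :=
        mul_le_mul_of_nonneg_right ih (Sf_pos cc t n).le
      _ = (cc.xi ^ t) ^ k * (Sf cc t (k * n) * Sf cc t n) := by ring
      _ ≤ (cc.xi ^ t) ^ k * (cc.xi ^ t * Sf cc t (k * n + n)) :=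
        mul_le_mul_of_nonneg_left (Sf_supermul cc ht _ _) (pow_nonneg hxt _)
      _ = (cc.xi ^ t) ^ (k + 1) * Sf cc t (k * n + n) := by ring

end CCAux

namespace CCAux
open Set Real Filter
variable (cc : CookieCutter)

lemma tendsto_mul_n (n : ℕ) (hn : 1 ≤ n) :
    Tendsto (fun k : ℕ => k * n) atTop atTop := by
  apply tendsto_atTop_atTop.2
  intro m
  exact ⟨m, fun k hk => le_trans hk (Nat.le_mul_of_pos_right k (by omega))⟩

lemma Q_le_of_tendsto {Q : ℝ → ℝ}
    (hQ : ∀ t : ℝ, Tendsto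
      (fun k : ℕ => (1 / (k : ℝ)) * Real.log (Sf cc t k)) atTop (nhds (Q t)))
    {t : ℝ} (ht : 0 ≤ t) {n : ℕ} (hn : 1 ≤ n) :
    Q t ≤ (1 / (n : ℝ)) * Real.log (Sf cc t n) := by
  have hnR : (0:ℝ) < n := by exact_mod_cast hn
  have hcomp : Tendsto (fun k : ℕ => (1 / ((k * n : ℕ) : ℝ)) * Real.log (Sf cc t (k * n)))
      atTop (nhds (Q t)) := (hQ t).comp (tendsto_mul_n n hn)
  apply le_of_tendsto hcomp
  filter_upwards [eventually_ge_atTop 1] with k hk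
  have hkR : (0:ℝ) < k := by exact_mod_cast hk
  have h1 : Real.log (Sf cc t (k * n)) ≤ (k : ℝ) * Real.log (Sf cc t n) := by
    calc Real.log (Sf cc t (k * n)) ≤ Real.log (Sf cc t n ^ k) :=
          Real.log_le_log (Sf_pos cc t _) (Sf_pow_le cc ht n k)
      _ = (k : ℝ) * Real.log (Sf cc t n) := by rw [Real.log_pow]
  have hcast : ((k * n : ℕ) : ℝ) = (k : ℝ) * (n : ℝ) := by push_cast; ring
  rw [hcast, div_mul_eq_mul_div, one_mul, div_le_iff₀ (by positivity)]
  calc Real.log (Sf cc t (k * n)) ≤ (k : ℝ) * Real.log (Sf cc t n) := h1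
    _ = 1 / (n:ℝ) * Real.log (Sf cc t n) * ((k:ℝ) * (n:ℝ)) := by
        field_simp

lemma le_Q_of_tendsto {Q : ℝ → ℝ}
    (hQ : ∀ t : ℝ, Tendsto
      (fun k : ℕ => (1 / (k : ℝ)) * Real.log (Sf cc t k)) atTop (nhds (Q t)))
    {t : ℝ} (ht : 0 ≤ t) {n : ℕ} (hn : 1 ≤ n) :
    (1 / (n : ℝ)) * (Real.log (Sf cc t n) - t * Real.log cc.xi) ≤ Q t := by
  have hnR : (0:ℝ) < n := by exact_mod_cast hn
  have hcomp : Tendsto (fun k : ℕ => (1 / ((k * n : ℕ) : ℝ)) * Real.log (Sf cc t (k * n)))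
      atTop (nhds (Q t)) := (hQ t).comp (tendsto_mul_n n hn)
  apply ge_of_tendsto hcomp
  filter_upwards [eventually_ge_atTop 1] with k hk
  have hkR : (0:ℝ) < k := by exact_mod_cast hk
  have h1 : (k : ℝ) * (Real.log (Sf cc t n) - t * Real.log cc.xi)
      ≤ Real.log (Sf cc t (k * n)) := by
    have h2 : Real.log (Sf cc t n ^ k) ≤ Real.log ((cc.xi ^ t) ^ k * Sf cc t (k * n)) :=
      Real.log_le_log (pow_pos (Sf_pos cc t n) k) (le_Sf_pow cc ht n k)
    rw [Real.log_pow,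
      Real.log_mul (pow_pos (Real.rpow_pos_of_pos (xi_pos cc) t) k).ne' (Sf_pos cc t _).ne',
      Real.log_pow, Real.log_rpow (xi_pos cc)] at h2
    nlinarith [h2]
  have hcast : ((k * n : ℕ) : ℝ) = (k : ℝ) * (n : ℝ) := by push_cast; ring
  rw [hcast, show (1:ℝ)/((k:ℝ)*(n:ℝ)) * Real.log (Sf cc t (k*n))
    = Real.log (Sf cc t (k*n)) / ((k:ℝ)*(n:ℝ)) from by ring, le_div_iff₀ (by positivity)]
  calc 1 / (n:ℝ) * (Real.log (Sf cc t n) - t * Real.log cc.xi) * ((k:ℝ) * (n:ℝ))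
      = (k : ℝ) * (Real.log (Sf cc t n) - t * Real.log cc.xi) := by
        field_simp
    _ ≤ Real.log (Sf cc t (k * n)) := h1

lemma Q_antitone {Q : ℝ → ℝ}
    (hQ : ∀ t : ℝ, Tendsto
      (fun k : ℕ => (1 / (k : ℝ)) * Real.log (Sf cc t k)) atTop (nhds (Q t)))
    {t t' : ℝ} (htt' : t ≤ t') :
    Q t' ≤ Q t - (t' - t) * Real.log cc.b := by
  have hb0 := b_pos cc
  apply le_of_tendsto_of_tendsto (hQ t') ((hQ t).sub_const ((t' - t) * Real.log cc.b))
  filter_upwards [eventually_ge_atTop 1] with n hn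
  have hnR : (0:ℝ) < n := by exact_mod_cast hn
  have hterm : Sf cc t' n ≤ Sf cc t n * (cc.b⁻¹ ^ n) ^ (t' - t) := by
    rw [Sf, Sf, Finset.sum_mul]
    apply Finset.sum_le_sum
    intro σ _
    have hφ := phinorm_pos cc (List.ofFn σ)
    calc cc.φnorm (List.ofFn σ) ^ t'
        = cc.φnorm (List.ofFn σ) ^ t * cc.φnorm (List.ofFn σ) ^ (t' - t) := by
          rw [← Real.rpow_add hφ]; ring_nf
      _ ≤ cc.φnorm (List.ofFn σ) ^ t * (cc.b⁻¹ ^ n) ^ (t' - t) := by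
          apply mul_le_mul_of_nonneg_left _ (Real.rpow_pos_of_pos hφ t).le
          apply Real.rpow_le_rpow hφ.le _ (by linarith)
          have := phinorm_le_pow cc (List.ofFn σ)
          rwa [List.length_ofFn] at this
  have hlog : Real.log (Sf cc t' n) ≤ Real.log (Sf cc t n)
      - (t' - t) * ((n : ℝ) * Real.log cc.b) := by
    have h2 : Real.log (Sf cc t' n) ≤ Real.log (Sf cc t n * (cc.b⁻¹ ^ n) ^ (t' - t)) :=
      Real.log_le_log (Sf_pos cc t' n) hterm
    rw [Real.log_mul (Sf_pos cc t n).ne' (by positivity),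
      Real.log_rpow (by positivity), Real.log_pow, Real.log_inv] at h2
    push_cast at h2 ⊢
    nlinarith [h2]
  show (1 / (n:ℝ)) * Real.log (Sf cc t' n)
      ≤ (1 / (n:ℝ)) * Real.log (Sf cc t n) - (t' - t) * Real.log cc.b
  have key : (1 / (n:ℝ)) * Real.log (Sf cc t' n)
      ≤ (1 / (n:ℝ)) * (Real.log (Sf cc t n) - (t' - t) * ((n : ℝ) * Real.log cc.b)) :=
    mul_le_mul_of_nonneg_left hlog (by positivity)
  calc (1 / (n:ℝ)) * Real.log (Sf cc t' n)
      ≤ (1 / (n:ℝ)) * (Real.log (Sf cc t n) - (t' - t) * ((n : ℝ) * Real.log cc.b)) := key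
    _ = (1 / (n:ℝ)) * Real.log (Sf cc t n) - (t' - t) * Real.log cc.b * ((n:ℝ) * (1/(n:ℝ))) := by
        ring
    _ = (1 / (n:ℝ)) * Real.log (Sf cc t n) - (t' - t) * Real.log cc.b := by
        rw [mul_one_div_cancel hnR.ne', mul_one]

end CCAux


theorem sum_diam_rpow_bounds (cc : CookieCutter) (Q : ℝ → ℝ)
    (hQ : ∀ t : ℝ, Filter.Tendsto
      (fun k : ℕ => (1 / (k : ℝ)) * Real.log
        (∑ σ : Fin k → Fin cc.N, cc.φnorm (List.ofFn σ) ^ t))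
      Filter.atTop (nhds (Q t)))
    (h : ℝ) (hh0 : 0 < h) (hQh : Q h = 0)
    (s₁ s₂ : ℝ) (hs₁ : 0 < s₁) (hs₁h : s₁ < h) (hhs₂ : h < s₂) :
    ∀ n : ℕ, 1 ≤ n →
      cc.xi ^ (-(3 * s₁)) < ∑ σ : Fin n → Fin cc.N, cc.diamJ (List.ofFn σ) ^ s₁ ∧
      ∑ σ : Fin n → Fin cc.N, cc.diamJ (List.ofFn σ) ^ s₂ < cc.xi ^ (3 * s₂) := by
  have hQ' : ∀ t : ℝ, Filter.Tendsto
      (fun k : ℕ => (1 / (k : ℝ)) * Real.log (CCAux.Sf cc t k))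
      Filter.atTop (nhds (Q t)) := hQ
  have hξ1 := CCAux.one_lt_xi cc
  have hξ0 := CCAux.xi_pos cc
  have hlogb : 0 < Real.log cc.b := Real.log_pos cc.hb1
  have hs₁0 : (0:ℝ) ≤ s₁ := hs₁.le
  have hs₂0 : (0:ℝ) < s₂ := lt_trans hh0 hhs₂
  have hQs1 : 0 < Q s₁ := by
    have hqa := CCAux.Q_antitone cc hQ' hs₁h.le
    rw [hQh] at hqa
    nlinarith [mul_pos (sub_pos.2 hs₁h) hlogb]
  have hQs2 : Q s₂ < 0 := by
    have hqa := CCAux.Q_antitone cc hQ' hhs₂.le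
    rw [hQh] at hqa
    nlinarith [mul_pos (sub_pos.2 hhs₂) hlogb]
  intro n hn
  have hnR : (0:ℝ) < n := by exact_mod_cast hn
  have h1n : (0:ℝ) < 1 / (n:ℝ) := by positivity
  constructor
  · -- lower bound
    have hQle := CCAux.Q_le_of_tendsto cc hQ' hs₁0 hn
    have hlogS : 0 < Real.log (CCAux.Sf cc s₁ n) := by
      by_contra hcon
      push_neg at hcon
      have : (1/(n:ℝ)) * Real.log (CCAux.Sf cc s₁ n) ≤ 0 :=
        mul_nonpos_of_nonneg_of_nonpos h1n.le hcon
      linarith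
    have hS1 : 1 < CCAux.Sf cc s₁ n := by
      by_contra hcon
      push_neg at hcon
      have := Real.log_nonpos (CCAux.Sf_pos cc s₁ n).le hcon
      linarith
    have hterm : ∀ σ : Fin n → Fin cc.N,
        cc.xi ^ (-s₁) * cc.φnorm (List.ofFn σ) ^ s₁ ≤ cc.diamJ (List.ofFn σ) ^ s₁ := by
      intro σ
      have hφpos := CCAux.phinorm_pos cc (List.ofFn σ)
      have h1 : (cc.xi⁻¹ * cc.φnorm (List.ofFn σ)) ^ s₁ ≤ cc.diamJ (List.ofFn σ) ^ s₁ :=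
        Real.rpow_le_rpow (by positivity) (CCAux.xi_inv_phinorm_le_diamJ cc _) hs₁0
      calc cc.xi ^ (-s₁) * cc.φnorm (List.ofFn σ) ^ s₁
          = (cc.xi⁻¹ * cc.φnorm (List.ofFn σ)) ^ s₁ := by
            rw [Real.mul_rpow (by positivity) hφpos.le,
              Real.inv_rpow hξ0.le, ← Real.rpow_neg hξ0.le]
        _ ≤ _ := h1
    have hsum : cc.xi ^ (-s₁) * CCAux.Sf cc s₁ n
        ≤ ∑ σ : Fin n → Fin cc.N, cc.diamJ (List.ofFn σ) ^ s₁ := by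
      rw [CCAux.Sf, Finset.mul_sum]
      exact Finset.sum_le_sum fun σ _ => hterm σ
    have hx0 : 0 < cc.xi ^ (-s₁) := Real.rpow_pos_of_pos hξ0 _
    calc cc.xi ^ (-(3 * s₁)) ≤ cc.xi ^ (-s₁) := by
          apply Real.rpow_le_rpow_of_exponent_le hξ1.le
          linarith
      _ < cc.xi ^ (-s₁) * CCAux.Sf cc s₁ n := by nlinarith [hS1, hx0]
      _ ≤ _ := hsum
  · -- upper bound
    have hQge := CCAux.le_Q_of_tendsto cc hQ' hs₂0.le hn
    have hlogS : Real.log (CCAux.Sf cc s₂ n) < s₂ * Real.log cc.xi := by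
      by_contra hcon
      push_neg at hcon
      have : 0 ≤ (1/(n:ℝ)) * (Real.log (CCAux.Sf cc s₂ n) - s₂ * Real.log cc.xi) :=
        mul_nonneg h1n.le (by linarith)
      linarith
    have hSlt : CCAux.Sf cc s₂ n < cc.xi ^ s₂ := by
      have hh := Real.exp_lt_exp.2 hlogS
      rwa [Real.exp_log (CCAux.Sf_pos cc s₂ n),
        ← Real.log_rpow hξ0 s₂, Real.exp_log (Real.rpow_pos_of_pos hξ0 s₂)] at hh
    have hsum : ∑ σ : Fin n → Fin cc.N, cc.diamJ (List.ofFn σ) ^ s₂ ≤ CCAux.Sf cc s₂ n := by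
      rw [CCAux.Sf]
      exact Finset.sum_le_sum fun σ _ =>
        Real.rpow_le_rpow (CCAux.diamJ_nonneg cc _) (CCAux.diamJ_le_phinorm cc _) hs₂0.le
    calc ∑ σ : Fin n → Fin cc.N, cc.diamJ (List.ofFn σ) ^ s₂ ≤ CCAux.Sf cc s₂ n := hsum
      _ < cc.xi ^ s₂ := hSlt
      _ ≤ cc.xi ^ (3 * s₂) := Real.rpow_le_rpow_of_exponent_le hξ1.le (by linarith)
end
end
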